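/- arXiv:1010.0441 — 10 statements merged into one kernel-verified Lean document; each statement's English description precedes it below -/
import Mathlib

section
/- If f : X → Z is a cliquish map from a topological space X to a metric space (Z,d), then the set of points of continuity of f is residual in X (i.e., its complement is meager). -/
open Set Topology

def Cliquish {X Z : Type*} [TopologicalSpace X] [MetricSpace Z] (f : X → Z) : Prop :=
  ∀ ε : ℝ, 0 < ε → ∀ U : Set X, IsOpen U → U.Nonempty →
    ∃ O : Set X, IsOpen O ∧ O.Nonempty ∧ O ⊆ U ∧
      ∀ x ∈ O, ∀ y ∈ O, dist (f x) (f y) < ε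

/-! A point lying in an open set on which `f` oscillates by less than `1 / (n + 1)`, for every `n`,
is a point of continuity. The union of such open sets is open for any `f`, and cliquishness says
precisely that it is dense, so the continuity points contain a countable intersection of dense
open sets. -/

section LowOscillation

variable {X Z : Type*} [TopologicalSpace X]

def lowOscillationSet [PseudoMetricSpace Z] (f : X → Z) (ε : ℝ) : Set X :=
  ⋃₀ {O : Set X | IsOpen O ∧ ∀ x ∈ O, ∀ y ∈ O, dist (f x) (f y) < ε}

theorem isOpen_lowOscillationSet [PseudoMetricSpace Z] (f : X → Z) (ε : ℝ) :
    IsOpen (lowOscillationSet f ε) :=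
  isOpen_sUnion fun _ hO => hO.1

theorem Cliquish.dense_lowOscillationSet [MetricSpace Z] {f : X → Z} (hf : Cliquish f)
    {ε : ℝ} (hε : 0 < ε) : Dense (lowOscillationSet f ε) := by
  refine dense_iff_inter_open.2 fun U hU hUne => ?_
  obtain ⟨O, hO, ⟨x, hxO⟩, hOU, hOsmall⟩ := hf ε hε U hU hUne
  exact ⟨x, hOU hxO, O, ⟨hO, hOsmall⟩, hxO⟩

theorem continuousAt_of_forall_mem_lowOscillationSet [PseudoMetricSpace Z] {f : X → Z} {x : X}
    (hx : ∀ n : ℕ, x ∈ lowOscillationSet f (1 / (n + 1))) : ContinuousAt f x := by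
  refine Metric.continuousAt_iff'.2 fun ε hε => ?_
  obtain ⟨n, hn⟩ := exists_nat_one_div_lt hε
  obtain ⟨O, ⟨hO, hOsmall⟩, hxO⟩ := hx n
  filter_upwards [hO.mem_nhds hxO] with y hy
  exact (hOsmall y hy x hxO).trans hn

end LowOscillation

theorem cliquish_continuityPoints_residual {X Z : Type*} [TopologicalSpace X] [MetricSpace Z]
    (f : X → Z) (hf : Cliquish f) : {x : X | ContinuousAt f x} ∈ residual X := by
  have hres : (⋂ n : ℕ, lowOscillationSet f (1 / (n + 1))) ∈ residual X :=
    countable_iInter_mem.2 fun n =>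
      residual_of_dense_open (isOpen_lowOscillationSet f _)
        (hf.dense_lowOscillationSet (by positivity))
  exact Filter.mem_of_superset hres fun x hx =>
    continuousAt_of_forall_mem_lowOscillationSet (mem_iInter.1 hx)
end

section
/- Let Y be a topological space, y ∈ Y, and let N be a collection of subsets of Y such that: (i) for every neighborhood U of y there is a finite subcollection F ⊆ N with nonempty interior of ⋂F and ⋂F ⊆ U; and (ii) the closure of the set A = {z ∈ Y : the family {N ∈ N : z ∉ N} is countable} is a neighborhood of y. Then Player I has a winning strategy in the point-picking game G(A, y), where A is the collection of somewhere dense subsets of Y. -/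
/-!
Let `D` be the set of points `z` for which only countably many `N ∈ 𝒩` miss `z`. Player I
always plays inside `D`, so every point picked so far leaves only countably many members of `𝒩`
that it misses, and hence only countably many finite families of such members. By dovetailing,
Player I runs through all of these families `F'` in the course of the play, playing
`D ∩ ⋂₀ F'` whenever this set is somewhere dense. Given a neighbourhood `U` of `y`, take a finite
`F ⊆ 𝒩` as in (i) with `⋂₀ F ⊆ U ∩ interior (closure D)`, and let `F'` be the members of `F`
missed by some picked point. Then `D ∩ ⋂₀ F'` is somewhere dense, so at the stage where `F'`
comes up Player II picks a point of `⋂₀ F'`; that point lies in every member of `F`, because a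
member it missed would belong to `F'`, and so it lies in `U`.
-/

open Set Topology

/-- `σ` is a winning strategy for Player I in the point-picking game `G(L, y)`:
Player I's moves always belong to `L`, and for every play of Player II compatible
with `σ`, the point `y` is in the closure of the set of picked points. -/
def WinningStratI {Y : Type*} [TopologicalSpace Y] (L : Set (Set Y)) (y : Y)
    (σ : List Y → Set Y) : Prop :=
  (∀ s : List Y, σ s ∈ L) ∧
  ∀ p : ℕ → Y, (∀ n : ℕ, p n ∈ σ (List.ofFn fun i : Fin n => p i.1)) →
    y ∈ closure (Set.range p)

def PlayerIWins {Y : Type*} [TopologicalSpace Y] (L : Set (Set Y)) (y : Y) : Prop :=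
  ∃ σ : List Y → Set Y, WinningStratI L y σ

section Plays

variable {Y : Type*}

def playPrefix (p : ℕ → Y) (n : ℕ) : List Y := List.ofFn fun i : Fin n => p i.1

@[simp]
theorem length_playPrefix (p : ℕ → Y) (n : ℕ) : (playPrefix p n).length = n :=
  List.length_ofFn

theorem take_playPrefix (p : ℕ → Y) {k n : ℕ} (h : k ≤ n) :
    (playPrefix p n).take k = playPrefix p k := by
  rw [playPrefix, ← Fin.ofFn_take_eq_take_ofFn h]
  rfl

theorem mem_playPrefix {p : ℕ → Y} {n : ℕ} {z : Y} : z ∈ playPrefix p n ↔ ∃ m < n, p m = z := by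
  simp [playPrefix, List.mem_ofFn', Fin.exists_iff]

theorem exists_subset_biUnion_playPrefix {β : Type*} (T : Y → Set β) (p : ℕ → Y) {F : Set β}
    (hF : F.Finite) (hFT : F ⊆ ⋃ m, T (p m)) : ∃ k, F ⊆ ⋃ z ∈ playPrefix p k, T z := by
  obtain ⟨I, hI, hFI⟩ := finite_subset_iUnion hF hFT
  obtain ⟨k, hk⟩ := hI.bddAbove
  refine ⟨k + 1, hFI.trans <| iUnion₂_subset fun m hm => ?_⟩
  exact subset_biUnion_of_mem (u := T) (mem_playPrefix.2 ⟨m, Nat.lt_succ_of_le (hk hm), rfl⟩)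

/-- At a history of length `Nat.pair k j`, the `j`-th entry of the enumeration `E` attached to
the first `k` moves of that history. -/
def dovetail {α : Type*} (E : List Y → ℕ → α) (s : List Y) : α :=
  E (s.take s.length.unpair.1) s.length.unpair.2

theorem exists_dovetail_playPrefix_eq {α : Type*} (E : List Y → ℕ → α) (p : ℕ → Y) (k j : ℕ) :
    ∃ n, dovetail E (playPrefix p n) = E (playPrefix p k) j :=
  ⟨Nat.pair k j, by
    simp only [dovetail, length_playPrefix, Nat.unpair_pair,
      take_playPrefix p (Nat.left_le_pair k j)]⟩

theorem exists_enum_finite_subset_biUnion {β : Type*} (T : Y → Set β) :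
    ∃ E : List Y → ℕ → Set β, ∀ s : List Y, (∀ z ∈ s, (T z).Countable) →
      ∀ F : Set β, F.Finite → F ⊆ ⋃ z ∈ s, T z → F ∈ range (E s) := by
  have h : ∀ s : List Y, ∃ f : ℕ → Set β, (∀ z ∈ s, (T z).Countable) →
      {F | F.Finite ∧ F ⊆ ⋃ z ∈ s, T z} ⊆ range f := by
    intro s
    by_cases hs : ∀ z ∈ s, (T z).Countable
    · obtain ⟨f, hf⟩ := (countable_ofPred_finite_subset
        (s.finite_toSet.countable.biUnion hs)).exists_eq_range ⟨∅, finite_empty, empty_subset _⟩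
      exact ⟨f, fun _ => hf.subset⟩
    · exact ⟨fun _ => ∅, fun h => absurd h hs⟩
  choose E hE using h
  exact ⟨E, fun s hs F hF hFs => hE s hs ⟨hF, hFs⟩⟩

end Plays

section Topology

variable {Y : Type*} [TopologicalSpace Y]

theorem interior_subset_interior_closure_inter {D A : Set Y} (h : interior A ⊆ closure D) :
    interior A ⊆ interior (closure (D ∩ A)) := by
  refine interior_maximal (fun x hx => ?_) isOpen_interior
  have hx' : x ∈ closure (interior A ∩ D) := isOpen_interior.inter_closure ⟨hx, h hx⟩
  exact closure_mono (subset_inter inter_subset_right (inter_subset_left.trans interior_subset)) hx'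

noncomputable def guardedMove (D T : Set Y) : Set Y :=
  open scoped Classical in
  if (interior (closure (D ∩ T))).Nonempty then D ∩ T else D

theorem guardedMove_subset (D T : Set Y) : guardedMove D T ⊆ D := by
  unfold guardedMove
  split_ifs
  exacts [inter_subset_left, subset_rfl]

theorem guardedMove_eq_inter {D T : Set Y} (h : (interior (closure (D ∩ T))).Nonempty) :
    guardedMove D T = D ∩ T :=
  if_pos h

theorem interior_closure_guardedMove_nonempty {D : Set Y} (hD : (interior (closure D)).Nonempty)
    (T : Set Y) : (interior (closure (guardedMove D T))).Nonempty := by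
  unfold guardedMove
  split_ifs with h
  exacts [h, hD]

theorem winningStratI_guardedMove_dovetail {y : Y} {𝒩 : Set (Set Y)} {D : Set Y}
    (hy : y ∈ interior (closure D))
    (h𝒩 : ∀ U ∈ 𝓝 y, ∃ F ⊆ 𝒩, F.Finite ∧ (interior (⋂₀ F)).Nonempty ∧ ⋂₀ F ⊆ U)
    {E : List Y → ℕ → Set (Set Y)}
    (hE : ∀ s : List Y, (∀ z ∈ s, z ∈ D) → ∀ F : Set (Set Y), F.Finite →
      F ⊆ ⋃ z ∈ s, {N | N ∈ 𝒩 ∧ z ∉ N} → F ∈ range (E s)) :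
    WinningStratI {S | (interior (closure S)).Nonempty} y
      (fun s => guardedMove D (⋂₀ dovetail E s)) := by
  refine ⟨fun _ => interior_closure_guardedMove_nonempty ⟨y, hy⟩ _, fun p hp => ?_⟩
  have hpD : ∀ n, p n ∈ D := fun n => guardedMove_subset _ _ (hp n)
  refine mem_closure_iff_nhds.2 fun U hU => ?_
  obtain ⟨F, hF𝒩, hF, ⟨x, hx⟩, hFU⟩ :=
    h𝒩 (U ∩ interior (closure D)) (Filter.inter_mem hU (isOpen_interior.mem_nhds hy))
  set F' := {N ∈ F | ∃ m, p m ∉ N}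
  have hF'fin : F'.Finite := hF.subset (sep_subset F _)
  have hF'miss : F' ⊆ ⋃ m, {N | N ∈ 𝒩 ∧ p m ∉ N} := by
    rintro N ⟨hN, m, hm⟩
    exact mem_iUnion.2 ⟨m, hF𝒩 hN, hm⟩
  obtain ⟨k, hk⟩ := exists_subset_biUnion_playPrefix (fun z => {N | N ∈ 𝒩 ∧ z ∉ N}) p
    hF'fin hF'miss
  obtain ⟨j, hj⟩ := hE (playPrefix p k)
    (fun z hz => by obtain ⟨m, -, rfl⟩ := mem_playPrefix.1 hz; exact hpD m)
    F' hF'fin hk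
  obtain ⟨n, hn⟩ := exists_dovetail_playPrefix_eq E p k j
  have hdense : (interior (closure (D ∩ ⋂₀ F'))).Nonempty := by
    refine ⟨x, interior_mono (closure_mono (inter_subset_inter_right D
      (sInter_subset_sInter (sep_subset F _)))) ?_⟩
    exact interior_subset_interior_closure_inter
      (fun w hw => interior_subset (hFU (interior_subset hw)).2) hx
  have hpn : p n ∈ D ∩ ⋂₀ F' := by
    have := hp n
    change p n ∈ guardedMove D (⋂₀ dovetail E (playPrefix p n)) at this
    rwa [hn, hj, guardedMove_eq_inter hdense] at this
  have hpnF : p n ∈ ⋂₀ F := fun N hN => by_contra fun hpN => hpN (hpn.2 N ⟨hN, n, hpN⟩)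
  exact ⟨p n, (hFU hpnF).1, n, rfl⟩

end Topology

theorem playerI_wins_somewhereDense {Y : Type*} [TopologicalSpace Y] (y : Y)
    (𝒩 : Set (Set Y))
    (h1 : ∀ U ∈ nhds y, ∃ F : Set (Set Y), F ⊆ 𝒩 ∧ F.Finite ∧
      (interior (⋂₀ F)).Nonempty ∧ ⋂₀ F ⊆ U)
    (h2 : closure {z : Y | {N : Set Y | N ∈ 𝒩 ∧ z ∉ N}.Countable} ∈ nhds y) :
    PlayerIWins {S : Set Y | (interior (closure S)).Nonempty} y := by
  obtain ⟨E, hE⟩ := exists_enum_finite_subset_biUnion fun z : Y => {N | N ∈ 𝒩 ∧ z ∉ N}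
  exact ⟨_, winningStratI_guardedMove_dovetail (mem_interior_iff_mem_nhds.2 h2) h1 hE⟩
end

section
/- For every uncountable cardinal κ and every y ∈ 2^κ, Player I has a winning strategy in the game G(A, y) on 2^κ, where A is the collection of somewhere dense subsets of 2^κ. (Consequently the games G(O,y) and G(A,y) are genuinely different.) -/
open Set Topology

/-!
Player I only offers points that differ from `y` in finitely many coordinates, and that agree
with `y` on every coordinate where one of Player II's earlier points differed from `y`. In a
product of discrete spaces such a set is dense in an open neighbourhood of `y`, hence somewhere
dense. On the other hand each coordinate is then moved away from `y` at most once during the play,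
so a finite set of coordinates is moved only at finitely many stages, and at every other stage
the chosen point lies in the basic neighbourhood of `y` given by those coordinates.
-/

namespace PiGame

variable {ι : Type*} {X : ι → Type*}

def finiteDiff (y : ∀ i, X i) : Set (∀ i, X i) :=
  {z | {i | z i ≠ y i}.Finite}

def movedCoords (y : ∀ i, X i) (s : List (∀ i, X i)) : Set ι :=
  {i | ∃ w ∈ s, w ∈ finiteDiff y ∧ w i ≠ y i}

theorem finite_movedCoords (y : ∀ i, X i) (s : List (∀ i, X i)) :
    (movedCoords y s).Finite := by
  have hfin : {w | w ∈ s ∧ w ∈ finiteDiff y}.Finite :=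
    s.finite_toSet.subset fun _ hw => hw.1
  refine (hfin.biUnion fun w hw => hw.2).subset fun i ⟨w, hws, hwy, hwi⟩ => ?_
  exact mem_biUnion ⟨hws, hwy⟩ hwi

def strategy (y : ∀ i, X i) (s : List (∀ i, X i)) : Set (∀ i, X i) :=
  (movedCoords y s).pi (fun i => {y i}) ∩ finiteDiff y

theorem subsingleton_moves_of_strategy {p : ℕ → ∀ i, X i} {y : ∀ i, X i}
    (hp : ∀ n, p n ∈ strategy y (List.ofFn fun k : Fin n => p k.1)) (i : ι) :
    {n | p n i ≠ y i}.Subsingleton := by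
  have hlater : ∀ a b, a < b → p a i ≠ y i → p b i = y i := fun a b hab ha =>
    (hp b).1 i ⟨p a, List.mem_ofFn.mpr ⟨⟨a, hab⟩, rfl⟩, (hp a).2, ha⟩
  intro a ha b hb
  rcases lt_trichotomy a b with hab | rfl | hab
  · exact absurd (hlater a b hab ha) hb
  · rfl
  · exact absurd (hlater b a hab hb) ha

variable [∀ i, TopologicalSpace (X i)]

theorem mem_closure_of_forall_finset_exists_eq {s : Set (∀ i, X i)} {x : ∀ i, X i}
    (h : ∀ I : Finset ι, ∃ z ∈ s, ∀ i ∈ I, z i = x i) : x ∈ closure s := by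
  rw [mem_closure_iff_nhds, nhds_pi]
  intro t ht
  obtain ⟨I, u, hu, hIu⟩ := Filter.mem_pi'.mp ht
  obtain ⟨z, hzs, hzx⟩ := h I
  refine ⟨z, hIu fun i hi => ?_, hzs⟩
  rw [hzx i hi]
  exact mem_of_mem_nhds (hu i)

theorem dense_finiteDiff (y : ∀ i, X i) : Dense (finiteDiff y) := by
  classical
  intro x
  refine mem_closure_of_forall_finset_exists_eq fun I => ⟨I.piecewise x y, ?_, ?_⟩
  · refine I.finite_toSet.subset fun i hi => ?_
    by_contra hiI
    exact hi (Finset.piecewise_eq_of_notMem _ _ _ hiI)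
  · exact fun i hi => Finset.piecewise_eq_of_mem _ _ _ hi

theorem mem_closure_range_of_subsingleton {p : ℕ → ∀ i, X i} {y : ∀ i, X i}
    (h : ∀ i, {n | p n i ≠ y i}.Subsingleton) : y ∈ closure (range p) := by
  refine mem_closure_of_forall_finset_exists_eq fun I => ?_
  have hmoved : (⋃ i ∈ I, {n | p n i ≠ y i}).Finite :=
    I.finite_toSet.biUnion fun i _ => (h i).finite
  obtain ⟨n, hn⟩ := hmoved.exists_notMem
  refine ⟨p n, mem_range_self n, fun i hi => ?_⟩
  by_contra hne
  exact hn (mem_biUnion hi hne)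

theorem interior_closure_strategy_nonempty [∀ i, DiscreteTopology (X i)]
    (y : ∀ i, X i) (s : List (∀ i, X i)) :
    (interior (closure (strategy y s))).Nonempty := by
  have hopen : IsOpen ((movedCoords y s).pi fun i => {y i}) :=
    isOpen_set_pi (finite_movedCoords y s) fun i _ => isOpen_discrete _
  have hy : y ∈ (movedCoords y s).pi fun i => {y i} := fun i _ => rfl
  exact ⟨y, interior_maximal ((dense_finiteDiff y).open_subset_closure_inter hopen) hopen hy⟩

theorem playerIWins_somewhereDense [∀ i, DiscreteTopology (X i)] (y : ∀ i, X i) :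
    PlayerIWins {S : Set (∀ i, X i) | (interior (closure S)).Nonempty} y :=
  ⟨strategy y, interior_closure_strategy_nonempty y, fun _ hp =>
    mem_closure_range_of_subsingleton (subsingleton_moves_of_strategy hp)⟩

end PiGame

theorem playerI_wins_somewhereDense_cantorCube_general {κ : Type*}
    (y : κ → Bool) :
    PlayerIWins {S : Set (κ → Bool) | (interior (closure S)).Nonempty} y :=
  PiGame.playerIWins_somewhereDense y

theorem playerI_wins_somewhereDense_cantorCube {κ : Type*} [Uncountable κ]
    (y : κ → Bool) :
    PlayerIWins {S : Set (κ → Bool) | (interior (closure S)).Nonempty} y :=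
  playerI_wins_somewhereDense_cantorCube_general y
end

section
/- Suppose Player I has a winning strategy τ in the game G(L, y) on Y. Then for every neighborhood V of y in Y, Player I has a winning strategy σ in G(L, y) such that σ(s) ⊆ V for every finite sequence s of points of Y. -/
open Set Topology

/-!
Fix an open `U` with `y ∈ U ⊆ V`. Against `τ`, Player II can "stall" by answering with points
outside `U` for as long as `τ` lets her; these points never help to approach `y`. If from a
legal position `t` she could stall forever, the resulting play would be won by `τ`, so already
`y ∈ closure t`. Hence, unless `y` is already in the closure of the points played, every legal
position has a stalling continuation after which `τ` plays inside `U`. The strategy `σ` keeps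
a shadow play against `τ`: it inserts Player II's actual answer, then such a stalling
continuation, and plays what `τ` plays there. A play against `σ` either produces an infinite
shadow play against `τ`, whose points inside `U` are actual answers, or at some stage admits
no stalling continuation; in both cases `y` lies in the closure of the actual answers.
-/

lemma IsOpen.mem_closure_of_inter_subset {X : Type*} [TopologicalSpace X] {U A B : Set X}
    {x : X} (hU : IsOpen U) (hxU : x ∈ U) (hx : x ∈ closure A) (hAB : U ∩ A ⊆ B) :
    x ∈ closure B :=
  closure_mono hAB (hU.inter_closure ⟨hxU, hx⟩)

namespace PointPicking

variable {Y : Type*} (τ : List Y → Set Y)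

def IsLegalPosition (t : List Y) : Prop :=
  ∀ i (h : i < t.length), t[i] ∈ τ (t.take i)

def IsLegalPlay (p : ℕ → Y) : Prop :=
  ∀ n : ℕ, p n ∈ τ (List.ofFn fun i : Fin n => p i.1)

variable {τ}

lemma isLegalPosition_nil : IsLegalPosition τ [] := by
  simp [IsLegalPosition]

lemma IsLegalPosition.append_singleton {t : List Y} (ht : IsLegalPosition τ t) {a : Y}
    (ha : a ∈ τ t) : IsLegalPosition τ (t ++ [a]) := by
  intro i hi
  rw [List.length_append, List.length_singleton, Nat.lt_succ_iff] at hi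
  rcases hi.lt_or_eq with hi | rfl
  · rw [List.getElem_append_left hi, List.take_append_of_le_length hi.le]
    exact ht i hi
  · simpa using ha

lemma exists_isLegalPlay_of_chain {w : ℕ → List Y} (hw : ∀ n, IsLegalPosition τ (w n))
    (hstep : ∀ n, ∃ a, w n ++ [a] <+: w (n + 1)) :
    ∃ q : ℕ → Y, IsLegalPlay τ q ∧ ∀ k, ∃ n, q k ∈ w n := by
  have hpre : ∀ ⦃m n⦄, m ≤ n → w m <+: w n :=
    Nat.rel_of_forall_rel_succ_of_le (· <+: ·) fun n =>
      let ⟨a, ha⟩ := hstep n; (List.prefix_append _ _).trans ha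
  have hlen : ∀ n, n ≤ (w n).length := by
    intro n
    induction n with
    | zero => exact Nat.zero_le _
    | succ n ih =>
      obtain ⟨a, ha⟩ := hstep n
      have := ha.length_le
      simp only [List.length_append, List.length_singleton] at this
      omega
  have hlt : ∀ k, k < (w (k + 1)).length := fun k => hlen (k + 1)
  let q : ℕ → Y := fun k => (w (k + 1))[k]'(hlt k)
  have hq : ∀ k m (h : k < m), q k = (w m)[k]'((hlt k).trans_le (hpre h).length_le) :=
    fun k m h => (hpre h).getElem (hlt k)
  have hprefix : ∀ k, (List.ofFn fun i : Fin k => q i.1) = (w (k + 1)).take k := by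
    intro k
    apply List.ext_getElem
    · simpa using (hlt k).le
    · intro i hi _
      rw [List.getElem_ofFn, List.getElem_take]
      exact hq i (k + 1) (by simp at hi; omega)
  refine ⟨q, fun k => ?_, fun k => ⟨k + 1, List.getElem_mem _⟩⟩
  rw [hprefix k]
  exact hw (k + 1) k (hlt k)

variable (τ) (U : Set Y)

def IsStall (t u : List Y) : Prop :=
  (∀ a ∈ u, a ∉ U) ∧ IsLegalPosition τ (t ++ u) ∧ τ (t ++ u) ⊆ U

variable {τ U}

lemma exists_isStall [TopologicalSpace Y] {y : Y}
    (hτ : ∀ p, IsLegalPlay τ p → y ∈ closure (range p)) (hU : IsOpen U) (hyU : y ∈ U)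
    {t : List Y} (ht : IsLegalPosition τ t) (hyt : y ∉ closure {a | a ∈ t}) :
    ∃ u, IsStall τ U t u := by
  by_contra! hstall
  have hescape : ∀ u, (∀ a ∈ u, a ∉ U) → IsLegalPosition τ (t ++ u) →
      ∃ a ∈ τ (t ++ u), a ∉ U :=
    fun u hu hlegal => Set.not_subset.mp fun hsub => hstall u ⟨hu, hlegal, hsub⟩
  have : Nonempty Y := ⟨y⟩
  choose! next hnext_mem hnext_out using hescape
  let v : ℕ → List Y := fun n => Nat.rec [] (fun _ u => u ++ [next u]) n
  have hv : ∀ n, (∀ a ∈ v n, a ∉ U) ∧ IsLegalPosition τ (t ++ v n) := by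
    intro n
    induction n with
    | zero => simpa [v] using ht
    | succ n ih =>
      refine ⟨fun a ha => ?_, ?_⟩
      · rcases List.mem_append.mp ha with ha | ha
        · exact ih.1 a ha
        · rw [List.mem_singleton.mp ha]; exact hnext_out _ ih.1 ih.2
      · simpa [v] using ih.2.append_singleton (hnext_mem _ ih.1 ih.2)
  obtain ⟨q, hq, hqv⟩ := exists_isLegalPlay_of_chain (fun n => (hv n).2)
    fun n => ⟨next (v n), by simp [v]⟩
  refine hyt (hU.mem_closure_of_inter_subset hyU (hτ q hq) ?_)
  rintro _ ⟨haU, k, rfl⟩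
  obtain ⟨n, hn⟩ := hqv k
  rcases List.mem_append.mp hn with h | h
  · exact h
  · exact absurd haU ((hv n).1 _ h)

variable (τ U)

/-- The fallback `t₀` is only used once `y` is already in the closure of Player II's answers
(by `exists_isStall`); it merely keeps `τ` inside `U`. -/
noncomputable def redirect (t₀ t : List Y) : List Y :=
  open Classical in if h : ∃ u, IsStall τ U t u then t ++ h.choose else t₀

noncomputable def shadow (t₀ s : List Y) : List Y :=
  s.foldl (fun t a => redirect τ U t₀ (t ++ [a])) t₀

variable {τ U} {t₀ : List Y}

lemma shadow_append_singleton (s : List Y) (a : Y) :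
    shadow τ U t₀ (s ++ [a]) = redirect τ U t₀ (shadow τ U t₀ s ++ [a]) := by
  simp [shadow, List.foldl_append]

lemma redirect_of_exists {t : List Y} (h : ∃ u, IsStall τ U t u) :
    redirect τ U t₀ t = t ++ h.choose := by
  simp [redirect, h]

lemma redirect_eq_or (t : List Y) :
    redirect τ U t₀ t = t₀ ∨ ∃ u, IsStall τ U t u ∧ redirect τ U t₀ t = t ++ u := by
  by_cases h : ∃ u, IsStall τ U t u
  · exact Or.inr ⟨h.choose, h.choose_spec, redirect_of_exists h⟩
  · exact Or.inl (by simp [redirect, h])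

lemma shadow_spec (h₀ : IsStall τ U [] t₀) (s : List Y) :
    IsLegalPosition τ (shadow τ U t₀ s) ∧ τ (shadow τ U t₀ s) ⊆ U ∧
      ∀ a ∈ shadow τ U t₀ s, a ∈ U → a ∈ s := by
  have hbase : ∀ s' : List Y, IsLegalPosition τ t₀ ∧ τ t₀ ⊆ U ∧ ∀ a ∈ t₀, a ∈ U → a ∈ s' :=
    fun _ => ⟨h₀.2.1, h₀.2.2, fun a ha haU => absurd haU (h₀.1 a ha)⟩
  induction s using List.reverseRecOn with
  | nil => exact hbase []
  | append_singleton s b ih =>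
    rw [shadow_append_singleton]
    rcases redirect_eq_or (t₀ := t₀) (shadow τ U t₀ s ++ [b]) with
      h | ⟨u, ⟨hu, hlegal, hsub⟩, h⟩ <;> rw [h]
    · exact hbase _
    · refine ⟨hlegal, hsub, fun a ha haU => ?_⟩
      simp only [List.mem_append, List.mem_singleton] at ha ⊢
      rcases ha with (ha | rfl) | ha
      · exact Or.inl (ih.2.2 a ha haU)
      · exact Or.inr rfl
      · exact absurd haU (hu a ha)

lemma shadow_ofFn_succ (p : ℕ → Y) (n : ℕ) :
    shadow τ U t₀ (List.ofFn fun i : Fin (n + 1) => p i.1) =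
      redirect τ U t₀ (shadow τ U t₀ (List.ofFn fun i : Fin n => p i.1) ++ [p n]) := by
  rw [List.ofFn_succ', List.concat_eq_append, shadow_append_singleton]
  rfl

lemma mem_closure_of_isLegalPlay_shadow [TopologicalSpace Y] {y : Y}
    (hτ : ∀ p, IsLegalPlay τ p → y ∈ closure (range p)) (hU : IsOpen U) (hyU : y ∈ U)
    (h₀ : IsStall τ U [] t₀) {p : ℕ → Y} (hp : IsLegalPlay (fun s => τ (shadow τ U t₀ s)) p) :
    y ∈ closure (range p) := by
  let w : ℕ → List Y := fun n => shadow τ U t₀ (List.ofFn fun i : Fin n => p i.1)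
  have hlegal : ∀ n, IsLegalPosition τ (w n ++ [p n]) :=
    fun n => (shadow_spec h₀ _).1.append_singleton (hp n)
  have hrange : ∀ n, ∀ a ∈ w n ++ [p n], a ∈ U → a ∈ range p := by
    intro n a ha haU
    rcases List.mem_append.mp ha with ha | ha
    · obtain ⟨i, rfl⟩ := List.mem_ofFn.mp ((shadow_spec h₀ _).2.2 a ha haU)
      exact ⟨i, rfl⟩
    · exact ⟨n, (List.mem_singleton.mp ha).symm⟩
  by_cases hstall : ∀ n, ∃ u, IsStall τ U (w n ++ [p n]) u
  · have hstep : ∀ n, ∃ a, w n ++ [a] <+: w (n + 1) := fun n =>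
      ⟨p n, by
        rw [show w (n + 1) = _ from shadow_ofFn_succ p n, redirect_of_exists (hstall n)]
        exact List.prefix_append _ _⟩
    obtain ⟨q, hq, hqw⟩ := exists_isLegalPlay_of_chain (fun n => (shadow_spec h₀ _).1) hstep
    refine hU.mem_closure_of_inter_subset hyU (hτ q hq) ?_
    rintro _ ⟨haU, k, rfl⟩
    obtain ⟨n, hn⟩ := hqw k
    exact hrange n _ (List.mem_append_left _ hn) haU
  · obtain ⟨n, hn⟩ := not_forall.mp hstall
    have hy : y ∈ closure {a | a ∈ w n ++ [p n]} :=
      by_contra fun hy => hn (exists_isStall hτ hU hyU (hlegal n) hy)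
    exact hU.mem_closure_of_inter_subset hyU hy fun a ⟨haU, ha⟩ => hrange n a ha haU

end PointPicking

theorem winning_strategy_inside_nbhd_general {Y : Type*} [TopologicalSpace Y]
    (L : Set (Set Y)) (y : Y)
    (τ : List Y → Set Y) (hτ : WinningStratI L y τ)
    (V : Set Y) (hV : V ∈ nhds y) :
    ∃ σ : List Y → Set Y, WinningStratI L y σ ∧ ∀ s : List Y, σ s ⊆ V := by
  obtain ⟨U, hUV, hU, hyU⟩ := mem_nhds_iff.mp hV
  obtain ⟨hτL, hτwin⟩ := hτ
  obtain ⟨t₀, h₀⟩ :=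
    PointPicking.exists_isStall hτwin hU hyU PointPicking.isLegalPosition_nil (by simp)
  refine ⟨fun s => τ (PointPicking.shadow τ U t₀ s), ⟨fun s => hτL _, fun p hp => ?_⟩,
    fun s => (PointPicking.shadow_spec h₀ s).2.1.trans hUV⟩
  exact PointPicking.mem_closure_of_isLegalPlay_shadow hτwin hU hyU h₀ hp

theorem winning_strategy_inside_nbhd {Y : Type*} [TopologicalSpace Y]
    (L : Set (Set Y)) (hL : ∀ S ∈ L, S.Nonempty) (y : Y)
    (τ : List Y → Set Y) (hτ : WinningStratI L y τ)
    (V : Set Y) (hV : V ∈ nhds y) :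
    ∃ σ : List Y → Set Y, WinningStratI L y σ ∧ ∀ s : List Y, σ s ⊆ V :=
  winning_strategy_inside_nbhd_general L y τ hτ V hV
end

section
/- Let X, Y be topological spaces, (Δ_x)_{x∈X} a family of subsets of Y × Y, and L a collection of nonempty subsets of Y such that for every y ∈ Y Player I has a winning strategy in the game G(L, y). Let R ⊆ X be a nonmeager (second category) subset such that Y is fragmented by Δ_x for each x ∈ R. Then for every nonempty open set V ⊆ Y there exist a nonempty open set U ⊆ X, a point y ∈ V, and a set L ∈ L with L ⊆ V, such that for every b ∈ L the set {x ∈ U : (b, y) ∈ Δ_x} is dense in U. -/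
/-!
Suppose the conclusion fails for `V`. Then whenever Player I, following a winning strategy in
`G(L, y)` with `y ∈ V`, plays a set inside `V`, every nonempty open `W ⊆ X` contains a nonempty
open `W'` and a point `b` of that set with `(b, y) ∉ Δ_x` for all `x ∈ W'`. Player α of the
Banach–Mazur game `BM(X ∖ R)` uses this to run, by dovetailing, plays of `G(L, y)` for
countably many `y ∈ V` at once: in each play Player II answers outside `V` when I's set leaves
`V`, and otherwise answers such a point `b`, which starts a play of its own.

Let `x` lie in all of α's open sets and let `S` be the set of all these points. A point `s ∈ S`
is in the closure of the answers of its play (Player I wins it), hence of those inside `V`, as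
`V` is an open neighbourhood of `s`. Each such answer `b` is in `S` and satisfies
`(b, s) ∉ Δ_x`, so no open set meeting `S` has its square in `Δ_x`: `Δ_x` does not fragment `Y`
and `x ∉ R`. Thus `R` is meagre.
-/

open Set Topology

/-- `Y` is fragmented by `Δ ⊆ Y × Y`: every nonempty subspace has a nonempty
relatively open subset `U` with `U × U ⊆ Δ`. -/
def FragmentedBy {Y : Type*} [TopologicalSpace Y] (Δ : Set (Y × Y)) : Prop :=
  ∀ S : Set Y, S.Nonempty → ∃ O : Set Y, IsOpen O ∧ (S ∩ O).Nonempty ∧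
    ∀ a ∈ S ∩ O, ∀ b ∈ S ∩ O, (a, b) ∈ Δ

theorem exists_isOpen_subset_disjoint_of_not_subset_closure {X : Type*} [TopologicalSpace X]
    {s t : Set X} (hs : IsOpen s) (h : ¬ s ⊆ closure (s ∩ t)) :
    ∃ u ⊆ s, IsOpen u ∧ u.Nonempty ∧ Disjoint u t :=
  ⟨s \ closure (s ∩ t), sdiff_subset, hs.sdiff isClosed_closure, sdiff_nonempty.2 h,
    disjoint_left.2 fun _ hx hxt => hx.2 (subset_closure ⟨hx.1, hxt⟩)⟩

theorem exists_pairwiseDisjoint_subset_closure {X ι : Type*} [TopologicalSpace X]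
    (U : ι → Set X) (C : Set ι) (O : Set X)
    (hC : ∀ N, IsOpen N → (N ∩ O).Nonempty → ∃ c ∈ C, (U c).Nonempty ∧ U c ⊆ N) :
    ∃ D ⊆ C, D.PairwiseDisjoint U ∧ O ⊆ closure (⋃ d ∈ D, U d) := by
  obtain ⟨D, hmax⟩ := zorn_subset {D | D ⊆ C ∧ D.PairwiseDisjoint U}
    fun c hc hchain => ⟨⋃₀ c, ⟨sUnion_subset fun D hD => (hc hD).1,
      (hchain.pairwiseDisjoint_sUnion U).2 fun D hD => (hc hD).2⟩,
      fun _ => subset_sUnion_of_mem⟩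
  obtain ⟨hDC, hD⟩ := hmax.prop
  refine ⟨D, hDC, hD, fun x hxO => mem_closure_iff.2 fun N hN hxN => ?_⟩
  by_contra hmiss
  have hND : Disjoint N (⋃ d ∈ D, U d) :=
    disjoint_iff_inter_eq_empty.2 (not_nonempty_iff_eq_empty.1 hmiss)
  obtain ⟨c, hcC, ⟨z, hz⟩, hcN⟩ := hC N hN ⟨x, hxN, hxO⟩
  have hcD : c ∈ D := by
    refine hmax.eq_of_subset ⟨insert_subset hcC hDC, hD.insert fun d hd _ => ?_⟩
      (subset_insert c D) ▸ mem_insert c D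
    exact hND.mono hcN (subset_biUnion_of_mem (u := U) hd)
  exact hmiss ⟨z, hcN hz, mem_biUnion hcD hz⟩

section Tree

variable {X P : Type*} {U : P → Set X} {D : P → Set P} {p₀ : P}

def treeLevel (D : P → Set P) (p₀ : P) : ℕ → Set P
  | 0 => {p₀}
  | n + 1 => ⋃ p ∈ treeLevel D p₀ n, D p

theorem pairwiseDisjoint_treeLevel (hsub : ∀ p, ∀ q ∈ D p, U q ⊆ U p)
    (hdisj : ∀ p, (D p).PairwiseDisjoint U) : ∀ n, (treeLevel D p₀ n).PairwiseDisjoint U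
  | 0 => pairwiseDisjoint_singleton _ _
  | n + 1 => ((pairwiseDisjoint_treeLevel hsub hdisj n).mono_on fun p _ =>
      iSup₂_le (hsub p)).biUnion fun p _ => hdisj p

theorem isOpen_of_mem_treeLevel [TopologicalSpace X] (hp₀ : U p₀ = univ)
    (hopen : ∀ p, ∀ q ∈ D p, IsOpen (U q)) :
    ∀ n, ∀ p ∈ treeLevel D p₀ n, IsOpen (U p)
  | 0, _, rfl => hp₀ ▸ isOpen_univ
  | n + 1, q, hq => by
    obtain ⟨p, -, hqp⟩ := mem_iUnion₂.1 hq
    exact hopen p q hqp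

theorem dense_biUnion_treeLevel [TopologicalSpace X] (hp₀ : U p₀ = univ)
    (hopen : ∀ p, ∀ q ∈ D p, IsOpen (U q))
    (hdense : ∀ p, IsOpen (U p) → U p ⊆ closure (⋃ q ∈ D p, U q)) :
    ∀ n, Dense (⋃ p ∈ treeLevel D p₀ n, U p)
  | 0 => by simp [treeLevel, hp₀]
  | n + 1 => by
    refine dense_closure.1 ((dense_biUnion_treeLevel hp₀ hopen hdense n).mono ?_)
    refine iUnion₂_subset fun p hp =>
      (hdense p (isOpen_of_mem_treeLevel hp₀ hopen n p hp)).trans ?_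
    exact closure_mono (biUnion_subset_biUnion_left (subset_biUnion_of_mem hp))

theorem exists_branch_of_mem_iInter_treeLevel (hsub : ∀ p, ∀ q ∈ D p, U q ⊆ U p)
    (hdisj : ∀ p, (D p).PairwiseDisjoint U) {x : X}
    (hx : x ∈ ⋂ n, ⋃ p ∈ treeLevel D p₀ n, U p) :
    ∃ b : ℕ → P, b 0 = p₀ ∧ (∀ n, b (n + 1) ∈ D (b n)) ∧ ∀ n, x ∈ U (b n) := by
  choose b hb hxb using fun n => mem_iUnion₂.1 (mem_iInter.1 hx n)
  refine ⟨b, hb 0, fun n => ?_, hxb⟩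
  obtain ⟨p, hp, hbp⟩ := mem_iUnion₂.1 (hb (n + 1))
  have : p = b n := (pairwiseDisjoint_treeLevel hsub hdisj n).elim hp (hb n)
    (not_disjoint_iff.2 ⟨x, hsub p _ hbp (hxb (n + 1)), hxb n⟩)
  exact this ▸ hbp

theorem setOf_exists_branch_mem_residual [TopologicalSpace X] (hp₀ : U p₀ = univ)
    (hopen : ∀ p, ∀ q ∈ D p, IsOpen (U q)) (hsub : ∀ p, ∀ q ∈ D p, U q ⊆ U p)
    (hdisj : ∀ p, (D p).PairwiseDisjoint U)
    (hdense : ∀ p, IsOpen (U p) → U p ⊆ closure (⋃ q ∈ D p, U q)) :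
    {x | ∃ b : ℕ → P, b 0 = p₀ ∧ (∀ n, b (n + 1) ∈ D (b n)) ∧ ∀ n, x ∈ U (b n)} ∈ residual X :=
  Filter.mem_of_superset
    (countable_iInter_mem.2 fun n => residual_of_dense_open
      (isOpen_biUnion (isOpen_of_mem_treeLevel hp₀ hopen n))
      (dense_biUnion_treeLevel hp₀ hopen hdense n))
    fun _ hx => exists_branch_of_mem_iInter_treeLevel hsub hdisj hx

end Tree

/-- Oxtoby's theorem. A position `p` of α in the Banach–Mazur game carries α's last open set
`U p`, and `move p q` says that `q` is an admissible reply of α from `p`. -/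
theorem isMeagre_of_strategy {X P : Type*} [TopologicalSpace X] {R : Set X}
    (U : P → Set X) (move : P → P → Prop) (p₀ : P) (hp₀ : U p₀ = univ)
    (h_move : ∀ p W, IsOpen W → W.Nonempty → W ⊆ U p →
      ∃ q, move p q ∧ IsOpen (U q) ∧ (U q).Nonempty ∧ U q ⊆ W)
    (h_play : ∀ b : ℕ → P, b 0 = p₀ → (∀ n, move (b n) (b (n + 1))) →
      ∀ x ∈ R, ∃ n, x ∉ U (b n)) :
    IsMeagre R := by
  choose D hDC hdisj hdense using fun p =>
    exists_pairwiseDisjoint_subset_closure U {q | move p q ∧ IsOpen (U q) ∧ U q ⊆ U p}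
      (interior (U p)) fun N hN hNp => by
        obtain ⟨q, hq, hqo, hqne, hqN⟩ :=
          h_move p _ (hN.inter isOpen_interior) hNp (inter_subset_right.trans interior_subset)
        exact ⟨q, ⟨hq, hqo, hqN.trans (inter_subset_right.trans interior_subset)⟩, hqne,
          hqN.trans inter_subset_left⟩
  refine Filter.mem_of_superset (setOf_exists_branch_mem_residual hp₀
    (fun p q hq => (hDC p hq).2.1) (fun p q hq => (hDC p hq).2.2) hdisj
    fun p hp => hp.interior_eq ▸ hdense p) ?_
  rintro x ⟨b, hb0, hb, hxb⟩ hxR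
  obtain ⟨n, hn⟩ := h_play b hb0 (fun n => (hDC _ (hb n)).1) x hxR
  exact hn (hxb n)

section Game

variable {Y : Type*}

def LegalPlay (σ : List Y → Set Y) (l : List Y) : Prop :=
  ∀ n (h : n < l.length), l[n] ∈ σ (l.take n)

theorem legalPlay_nil (σ : List Y → Set Y) : LegalPlay σ [] :=
  fun _ h => absurd h (Nat.not_lt_zero _)

theorem LegalPlay.concat {σ : List Y → Set Y} {l : List Y} (h : LegalPlay σ l) {z : Y}
    (hz : z ∈ σ l) : LegalPlay σ (l ++ [z]) := by
  intro n hn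
  rcases (Nat.lt_succ_iff.1 (by simpa using hn)).lt_or_eq with hlt | rfl
  · rw [List.getElem_append_left hlt, List.take_append_of_le_length hlt.le]
    exact h n hlt
  · simpa using hz

theorem exists_legal_seq_of_prefix_chain (σ : List Y → Set Y) (l : ℕ → List Y)
    (hmono : ∀ m, l m <+: l (m + 1)) (hlegal : ∀ m, LegalPlay σ (l m))
    (hlen : ∀ n, ∃ m, n < (l m).length) :
    ∃ p : ℕ → Y, (∀ n, p n ∈ σ (List.ofFn fun i : Fin n => p i)) ∧ ∀ n, ∃ m, p n ∈ l m := by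
  choose idx hidx using hlen
  set p : ℕ → Y := fun n => (l (idx n))[n]'(hidx n)
  have hprefix := Nat.rel_of_forall_rel_succ_of_le (· <+: ·) hmono
  have agree : ∀ m n (hn : n < (l m).length), (l m)[n] = p n := fun m n hn =>
    (le_total m (idx n)).elim (fun h => (hprefix h).getElem hn)
      fun h => ((hprefix h).getElem (hidx n)).symm
  refine ⟨p, fun n => ?_, fun n => ⟨idx n, List.getElem_mem _⟩⟩
  have htake : (List.ofFn fun i : Fin n => p i) = (l (idx n)).take n :=
    List.ext_getElem (by simp [(hidx n).le]) fun i _ h => by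
      rw [List.getElem_ofFn, List.getElem_take, agree]
  rw [htake]
  exact hlegal (idx n) n (hidx n)

theorem WinningStratI.mem_closure_of_prefix_chain [TopologicalSpace Y] {L : Set (Set Y)}
    {y : Y} {σ : List Y → Set Y} (hσ : WinningStratI L y σ) (l : ℕ → List Y)
    (hmono : ∀ m, l m <+: l (m + 1)) (hlegal : ∀ m, LegalPlay σ (l m))
    (hgrow : ∀ m, ∃ m', (l m).length < (l m').length) :
    y ∈ closure {z | ∃ m, z ∈ l m} := by
  have hlen : ∀ n, ∃ m, n < (l m).length := by
    intro n
    induction n with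
    | zero => exact (hgrow 0).imp fun _ h => (Nat.zero_le _).trans_lt h
    | succ n ih =>
      obtain ⟨m, hm⟩ := ih
      exact (hgrow m).imp fun _ h => (Nat.succ_le_of_lt hm).trans_lt h
  obtain ⟨p, hp, hpl⟩ := exists_legal_seq_of_prefix_chain σ l hmono hlegal hlen
  exact closure_mono (range_subset_iff.2 hpl : range p ⊆ _) (hσ.2 p hp)

end Game

/-- A position of α's strategy: besides its current open set `U`, α runs a play of
`G(L, point i)` in every slot `i`, Player I following `σ (point i)` and `history i` being the
moves of Player II so far. -/
structure SimultaneousPlays {X Y : Type*} (Δ : X → Set (Y × Y)) (V : Set Y)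
    (σ : Y → List Y → Set Y) where
  U : Set X
  round : ℕ
  point : ℕ → Y
  history : ℕ → List Y
  point_mem : ∀ i, point i ∈ V
  legal : ∀ i, LegalPlay (σ (point i)) (history i)
  mem_history : ∀ i, ∀ b ∈ history i, b ∈ V →
    (∃ j ≤ round, point j = b) ∧ ∀ x ∈ U, (b, point i) ∉ Δ x

namespace SimultaneousPlays

variable {X Y : Type*} {Δ : X → Set (Y × Y)} {V : Set Y} {σ : Y → List Y → Set Y}

def root (y₀ : Y) (hy₀ : y₀ ∈ V) : SimultaneousPlays Δ V σ where
  U := univ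
  round := 0
  point _ := y₀
  history _ := []
  point_mem _ := hy₀
  legal _ := legalPlay_nil _
  mem_history _ _ h := absurd h List.not_mem_nil

/-- Dovetailing: round `n` works on slot `(unpair n).1`, so every slot is visited infinitely
often; slot `round + 1` is still free. -/
def active (p : SimultaneousPlays Δ V σ) : ℕ := (Nat.unpair p.round).1

theorem active_ne_round_add_one (p : SimultaneousPlays Δ V σ) : p.active ≠ p.round + 1 :=
  ((Nat.unpair_left_le _).trans_lt p.round.lt_succ_self).ne

def advance (p : SimultaneousPlays Δ V σ) (z c : Y) (U' : Set X) (hU' : U' ⊆ p.U) (hc : c ∈ V)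
    (hz : z ∈ σ (p.point p.active) (p.history p.active))
    (hzV : z ∈ V → z = c ∧ ∀ x ∈ U', (c, p.point p.active) ∉ Δ x) :
    SimultaneousPlays Δ V σ where
  U := U'
  round := p.round + 1
  point := Function.update p.point (p.round + 1) c
  history := Function.update (Function.update p.history (p.round + 1) []) p.active
    (p.history p.active ++ [z])
  point_mem i := by
    rcases eq_or_ne i (p.round + 1) with rfl | hi
    · simpa using hc
    · simpa [hi] using p.point_mem i
  legal i := by
    rcases eq_or_ne i p.active with rfl | hia
    · simpa [p.active_ne_round_add_one] using (p.legal _).concat hz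
    rcases eq_or_ne i (p.round + 1) with rfl | hi
    · simpa [hia] using legalPlay_nil _
    · simpa [hia, hi] using p.legal i
  mem_history i b hb hbV := by
    have old : ∀ i ≠ p.round + 1, b ∈ p.history i →
        (∃ j ≤ p.round + 1, Function.update p.point (p.round + 1) c j = b) ∧
          ∀ x ∈ U', (b, Function.update p.point (p.round + 1) c i) ∉ Δ x := by
      intro i hi hb
      obtain ⟨⟨j, hj, rfl⟩, hΔ⟩ := p.mem_history i b hb hbV
      refine ⟨⟨j, hj.trans p.round.le_succ, ?_⟩, fun x hx => ?_⟩
      · simp [(hj.trans_lt p.round.lt_succ_self).ne]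
      · simpa [hi] using hΔ x (hU' hx)
    rcases eq_or_ne i p.active with rfl | hia
    · simp only [Function.update_self, List.mem_append, List.mem_singleton] at hb
      rcases hb with hb | rfl
      · exact old _ p.active_ne_round_add_one hb
      obtain ⟨rfl, hΔ⟩ := hzV hbV
      exact ⟨⟨p.round + 1, le_rfl, by simp⟩, by simpa [p.active_ne_round_add_one] using hΔ⟩
    rcases eq_or_ne i (p.round + 1) with rfl | hi
    · simp [hia] at hb
    · exact old i hi (by simpa [hia, hi] using hb)

def Step (p q : SimultaneousPlays Δ V σ) : Prop :=
  q.round = p.round + 1 ∧ (∀ i ≤ p.round, q.point i = p.point i ∧ p.history i <+: q.history i) ∧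
    (p.history p.active).length < (q.history p.active).length

theorem step_advance (p : SimultaneousPlays Δ V σ) {z c : Y} {U' : Set X} (hU' : U' ⊆ p.U)
    (hc : c ∈ V) (hz : z ∈ σ (p.point p.active) (p.history p.active))
    (hzV : z ∈ V → z = c ∧ ∀ x ∈ U', (c, p.point p.active) ∉ Δ x) :
    p.Step (p.advance z c U' hU' hc hz hzV) := by
  refine ⟨rfl, fun i hi => ?_, by simp [advance]⟩
  have hi' : i ≠ p.round + 1 := (hi.trans_lt p.round.lt_succ_self).ne
  refine ⟨by simp [advance, hi'], ?_⟩
  rcases eq_or_ne i p.active with rfl | hia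
  · simp [advance]
  · simp [advance, hi', hia]

theorem exists_step [TopologicalSpace X]
    (hstar : ∀ W : Set X, IsOpen W → W.Nonempty → ∀ y ∈ V, ∀ h, σ y h ⊆ V →
      ∃ b ∈ σ y h, ∃ W' ⊆ W, IsOpen W' ∧ W'.Nonempty ∧ ∀ x ∈ W', (b, y) ∉ Δ x)
    (p : SimultaneousPlays Δ V σ) {W : Set X} (hW : IsOpen W) (hne : W.Nonempty)
    (hWU : W ⊆ p.U) : ∃ q, p.Step q ∧ IsOpen q.U ∧ q.U.Nonempty ∧ q.U ⊆ W := by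
  by_cases hsub : σ (p.point p.active) (p.history p.active) ⊆ V
  · obtain ⟨b, hb, W', hW'W, hW'o, hW'ne, hΔ⟩ := hstar W hW hne _ (p.point_mem _) _ hsub
    exact ⟨_, p.step_advance (hW'W.trans hWU) (hsub hb) hb fun _ => ⟨rfl, hΔ⟩,
      hW'o, hW'ne, hW'W⟩
  · obtain ⟨z, hz, hzV⟩ := not_subset.1 hsub
    exact ⟨_, p.step_advance hWU (p.point_mem (p.round + 1)) hz fun h => absurd h hzV,
      hW, hne, subset_rfl⟩

section Play

variable {p : ℕ → SimultaneousPlays Δ V σ}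

theorem round_eq (hp : ∀ n, (p n).Step (p (n + 1))) (h0 : (p 0).round = 0) :
    ∀ n, (p n).round = n
  | 0 => h0
  | n + 1 => by rw [(hp n).1, round_eq hp h0 n]

theorem point_eq_and_history_prefix (hp : ∀ n, (p n).Step (p (n + 1)))
    (h0 : (p 0).round = 0) {k k' : ℕ} (hkk' : k ≤ k') {i : ℕ} (hi : i ≤ k) :
    (p k').point i = (p k).point i ∧ (p k).history i <+: (p k').history i := by
  induction k', hkk' using Nat.le_induction with
  | base => exact ⟨rfl, List.prefix_rfl⟩
  | succ k' hkk' ih =>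
    have := (hp k').2.1 i (by rw [round_eq hp h0]; exact hi.trans hkk')
    exact ⟨this.1.trans ih.1, ih.2.trans this.2⟩

theorem point_mem_closure_history [TopologicalSpace Y] {L : Set (Set Y)}
    (hσ : ∀ y, WinningStratI L y (σ y)) (hV : IsOpen V) (hp : ∀ n, (p n).Step (p (n + 1)))
    (h0 : (p 0).round = 0) (j : ℕ) :
    (p j).point j ∈ closure {b | b ∈ V ∧ ∃ m, b ∈ (p (j + m)).history j} := by
  have hpoint m := (point_eq_and_history_prefix hp h0 (Nat.le_add_right j m) le_rfl).1
  have hgrow :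
      ∀ m, ∃ m', ((p (j + m)).history j).length < ((p (j + m')).history j).length := by
    intro m
    set t := Nat.pair j (j + m)
    have ht : j + m ≤ t := Nat.right_le_pair _ _
    have hactive : (p t).active = j := by rw [active, round_eq hp h0, Nat.unpair_pair]
    refine ⟨t + 1 - j, ?_⟩
    rw [show j + (t + 1 - j) = t + 1 by omega]
    calc ((p (j + m)).history j).length
        ≤ ((p t).history j).length :=
          (point_eq_and_history_prefix hp h0 ht (Nat.le_add_right j m)).2.length_le
      _ < ((p (t + 1)).history j).length := hactive ▸ (hp t).2.2
  have hmem := (hσ ((p j).point j)).mem_closure_of_prefix_chain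
    (fun m => (p (j + m)).history j)
    (fun m => (point_eq_and_history_prefix hp h0 (Nat.le_succ (j + m))
      (Nat.le_add_right j m)).2)
    (fun m => hpoint m ▸ (p (j + m)).legal j) hgrow
  refine mem_closure_of_mem_closure_union (s₁ := Vᶜ) (closure_mono (fun b hb => ?_) hmem) ?_
  · by_cases hbV : b ∈ V
    exacts [Or.inr ⟨hbV, hb⟩, Or.inl hbV]
  · rw [compl_compl]
    exact hV.mem_nhds ((p j).point_mem j)

theorem not_fragmentedBy_of_forall_mem [TopologicalSpace Y] {L : Set (Set Y)}
    (hσ : ∀ y, WinningStratI L y (σ y)) (hV : IsOpen V) (hp : ∀ n, (p n).Step (p (n + 1)))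
    (h0 : (p 0).round = 0) {x : X} (hx : ∀ n, x ∈ (p n).U) : ¬ FragmentedBy (Δ x) := by
  intro hfrag
  obtain ⟨O, hO, ⟨_, ⟨j, rfl⟩, hjO⟩, hsq⟩ :=
    hfrag (range fun j => (p j).point j) (range_nonempty _)
  obtain ⟨b, hbO, hbV, m, hb⟩ :=
    mem_closure_iff.1 (point_mem_closure_history hσ hV hp h0 j) O hO hjO
  obtain ⟨⟨i, hi, rfl⟩, hΔ⟩ := (p (j + m)).mem_history j b hb hbV
  rw [round_eq hp h0] at hi
  rw [(point_eq_and_history_prefix hp h0 (Nat.le_add_right j m) le_rfl).1] at hΔ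
  rw [(point_eq_and_history_prefix hp h0 hi le_rfl).1] at hbO hΔ
  exact hΔ x (hx _) (hsq _ ⟨⟨i, rfl⟩, hbO⟩ _ ⟨⟨j, rfl⟩, hjO⟩)

end Play

end SimultaneousPlays

theorem key_proposition_general {X Y : Type*} [TopologicalSpace X] [TopologicalSpace Y]
    (Δ : X → Set (Y × Y)) (L : Set (Set Y))
    (hwin : ∀ y : Y, PlayerIWins L y)
    (R : Set X) (hR : ¬ IsMeagre R)
    (hfrag : ∀ x ∈ R, FragmentedBy (Δ x)) :
    ∀ V : Set Y, IsOpen V → V.Nonempty →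
      ∃ U : Set X, IsOpen U ∧ U.Nonempty ∧ ∃ y ∈ V, ∃ L' ∈ L, L' ⊆ V ∧
        ∀ b ∈ L', U ⊆ closure {x : X | x ∈ U ∧ (b, y) ∈ Δ x} := by
  intro V hV ⟨y₀, hy₀⟩
  by_contra! hcon
  choose σ hσ using hwin
  have hstar : ∀ W : Set X, IsOpen W → W.Nonempty → ∀ y ∈ V, ∀ h, σ y h ⊆ V →
      ∃ b ∈ σ y h, ∃ W' ⊆ W, IsOpen W' ∧ W'.Nonempty ∧ ∀ x ∈ W', (b, y) ∉ Δ x := by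
    intro W hW hne y hy h hsub
    obtain ⟨b, hb, hnot⟩ := hcon W hW hne y hy _ ((hσ y).1 h) hsub
    obtain ⟨W', hW'W, hW'o, hW'ne, hdisj⟩ :=
      exists_isOpen_subset_disjoint_of_not_subset_closure hW hnot
    exact ⟨b, hb, W', hW'W, hW'o, hW'ne, fun x hx => disjoint_left.1 hdisj hx⟩
  refine hR (isMeagre_of_strategy SimultaneousPlays.U SimultaneousPlays.Step
    (SimultaneousPlays.root y₀ hy₀) rfl (fun p W hW hne hWU => p.exists_step hstar hW hne hWU)
    fun p hp0 hp x hxR => ?_)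
  by_contra! hx
  exact SimultaneousPlays.not_fragmentedBy_of_forall_mem hσ hV hp (hp0 ▸ rfl) hx (hfrag x hxR)

theorem key_proposition {X Y : Type*} [TopologicalSpace X] [TopologicalSpace Y]
    (Δ : X → Set (Y × Y)) (L : Set (Set Y)) (hL : ∀ S ∈ L, S.Nonempty)
    (hwin : ∀ y : Y, PlayerIWins L y)
    (R : Set X) (hR : ¬ IsMeagre R)
    (hfrag : ∀ x ∈ R, FragmentedBy (Δ x)) :
    ∀ V : Set Y, IsOpen V → V.Nonempty →
      ∃ U : Set X, IsOpen U ∧ U.Nonempty ∧ ∃ y ∈ V, ∃ L' ∈ L, L' ⊆ V ∧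
        ∀ b ∈ L', U ⊆ closure {x : X | x ∈ U ∧ (b, y) ∈ Δ x} :=
  key_proposition_general Δ L hwin R hR hfrag
end

section
/- Let X be a Baire space, Y a topological space in which every point has a countable π-base, (Z,d) a metric space, and f : X × Y → Z. Suppose f is horizontally quasicontinuous, every section f^y : x ↦ f(x,y) is cliquish, and every section f_x : y ↦ f(x,y) is fragmentable. Then f is cliquish. -/
open Set Topology

def CliquishOn {X Z : Type*} [TopologicalSpace X] [MetricSpace Z] (f : X → Z) (S : Set X) : Prop :=
  ∀ ε : ℝ, 0 < ε → ∀ U : Set X, IsOpen U → (S ∩ U).Nonempty →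
    ∃ O : Set X, IsOpen O ∧ (S ∩ O).Nonempty ∧ S ∩ O ⊆ U ∧
      ∀ x ∈ S ∩ O, ∀ y ∈ S ∩ O, dist (f x) (f y) < ε

def Fragmentable {X Z : Type*} [TopologicalSpace X] [MetricSpace Z] (f : X → Z) : Prop :=
  ∀ S : Set X, S.Nonempty → CliquishOn f S

def CountablePiBase {Y : Type*} [TopologicalSpace Y] (y : Y) : Prop :=
  ∃ B : Set (Set Y), B.Countable ∧ (∀ O ∈ B, IsOpen O ∧ O.Nonempty) ∧
    ∀ U ∈ nhds y, ∃ O ∈ B, O ⊆ U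

/-- `f` is horizontally quasicontinuous at `(a, b)`. -/
def HorizontallyQuasicontinuousAt {X Y Z : Type*} [TopologicalSpace X] [TopologicalSpace Y]
    [MetricSpace Z] (f : X × Y → Z) (a : X) (b : Y) : Prop :=
  ∀ W ∈ nhds (f (a, b)), ∀ U ∈ nhds a, ∀ V ∈ nhds b,
    ∃ O : Set X, IsOpen O ∧ O.Nonempty ∧ O ⊆ U ∧ ∃ y ∈ V, ∀ x ∈ O, f (x, y) ∈ W


/-!
Fix a box `U × V` inside the given open set and `δ > 0`. Call a smaller box `U₀ × V₀` controlled
around `z` if the points `x` with `f(x, V₀) ⊆ closedBall z δ` are dense in `U₀`; by horizontal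
quasicontinuity `f` then maps the whole box into that ball. If no box is controlled, the
cliquishness of the sections `f^y` and horizontal quasicontinuity show that every nonempty open
`W ⊆ U` and `M ⊆ V` admit a nonempty open `O ⊆ W` and `u, w ∈ M` such that `f(x, u)` and
`f(x, w)` are `δ/2`-apart for all `x ∈ O`. Refining along maximal disjoint families of such sets
and taking, by the Baire property, a point `x₀` in all of them, one obtains a countable `S ⊆ V`
such that every member of the π-base of every point of `S` contains two points of `S` at which
`f_{x₀}` is `δ/2`-apart. So `f_{x₀}` is not cliquish on `S`, contradicting fragmentability.
-/

section PiDenseIn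

variable {X : Type*} [TopologicalSpace X]

/-- The nonempty open sets satisfying `P` form a π-base of `U`. -/
def PiDenseIn (U : Set X) (P : Set X → Prop) : Prop :=
  ∀ W, IsOpen W → W.Nonempty → W ⊆ U → ∃ O ⊆ W, IsOpen O ∧ O.Nonempty ∧ P O

theorem PiDenseIn.finset_forall {ι : Type*} [DecidableEq ι] {U : Set X}
    {P : ι → Set X → Prop} (hP : ∀ i O O', O' ⊆ O → P i O → P i O') (s : Finset ι)
    (h : ∀ i ∈ s, PiDenseIn U (P i)) : PiDenseIn U fun O => ∀ i ∈ s, P i O := by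
  induction s using Finset.induction_on with
  | empty => exact fun W hW hWne _ => ⟨W, subset_rfl, hW, hWne, by simp⟩
  | insert j s _ ih =>
    intro W hW hWne hWU
    obtain ⟨O₁, hO₁W, hO₁, hO₁ne, hPs⟩ :=
      ih (fun i hi => h i (Finset.mem_insert_of_mem hi)) W hW hWne hWU
    obtain ⟨O, hOO₁, hO, hOne, hPj⟩ :=
      h j (Finset.mem_insert_self j s) O₁ hO₁ hO₁ne (hO₁W.trans hWU)
    refine ⟨O, hOO₁.trans hO₁W, hO, hOne, ?_⟩
    simp only [Finset.forall_mem_insert]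
    exact ⟨hPj, fun i hi => hP i _ _ hOO₁ (hPs i hi)⟩

theorem PiDenseIn.exists_pairwiseDisjoint {D : Set X} {P : Set X → Prop} (hD : IsOpen D)
    (h : PiDenseIn D P) :
    ∃ 𝒪 : Set (Set X), (∀ O ∈ 𝒪, IsOpen O ∧ O ⊆ D ∧ P O) ∧ 𝒪.PairwiseDisjoint id ∧
      D ⊆ closure (⋃₀ 𝒪) := by
  obtain ⟨𝒪, h𝒪⟩ := zorn_subset
    {𝒪 : Set (Set X) | (∀ O ∈ 𝒪, IsOpen O ∧ O ⊆ D ∧ P O) ∧ 𝒪.PairwiseDisjoint id}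
    fun c hc hchain => ⟨⋃₀ c,
      ⟨fun O ⟨𝒪, h𝒪c, hO⟩ => (hc h𝒪c).1 O hO,
        (pairwiseDisjoint_sUnion hchain.directedOn).2 fun _ h𝒪c => (hc h𝒪c).2⟩,
      fun _ => subset_sUnion_of_mem⟩
  refine ⟨𝒪, h𝒪.1.1, h𝒪.1.2, fun x hx => mem_closure_iff.2 fun W hW hxW => ?_⟩
  by_contra hWdisj
  obtain ⟨O, hOW, hO, ⟨y, hyO⟩, hPO⟩ := h (W ∩ D) (hW.inter hD) ⟨x, hxW, hx⟩ inter_subset_right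
  have hO𝒪 : O ∈ 𝒪 := by
    refine h𝒪.2 ⟨?_, h𝒪.1.2.insert fun O' hO' _ => ?_⟩ (subset_insert O 𝒪) (mem_insert O 𝒪)
    · exact forall_mem_insert.2 ⟨⟨hO, hOW.trans inter_subset_right, hPO⟩, h𝒪.1.1⟩
    · exact disjoint_left.2 fun z hzO hzO' => hWdisj ⟨z, (hOW hzO).1, O', hO', hzO'⟩
  exact hWdisj ⟨y, (hOW hyO).1, O, hO𝒪, hyO⟩

structure LabelledDenseOpen (U : Set X) (α : Type*) where
  carrier : Set X
  label : X → α
  isOpen : IsOpen carrier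
  subset : carrier ⊆ U
  dense : U ⊆ closure carrier
  eventually_label_eq : ∀ x ∈ carrier, ∀ᶠ y in 𝓝 x, label y = label x

theorem LabelledDenseOpen.exists_refine {U : Set X} {α : Type*} [Nonempty α]
    (s : LabelledDenseOpen U α) (R : α → α → X → Prop)
    (h : ∀ a, PiDenseIn U fun O => ∃ a', ∀ x ∈ O, R a a' x) :
    ∃ s' : LabelledDenseOpen U α, ∀ x ∈ s'.carrier, R (s.label x) (s'.label x) x := by
  classical
  -- Local constancy of the old labels lets a single move serve a whole open set.
  have hP : PiDenseIn s.carrier fun O => ∃ a', ∀ x ∈ O, R (s.label x) a' x := by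
    rintro W hW ⟨x, hxW⟩ hWD
    obtain ⟨O, hOW, hO, hOne, a', ha'⟩ :=
      h (s.label x) (W ∩ interior {y | s.label y = s.label x}) (hW.inter isOpen_interior)
        ⟨x, hxW, mem_interior_iff_mem_nhds.2 (s.eventually_label_eq x (hWD hxW))⟩
        (inter_subset_left.trans (hWD.trans s.subset))
    refine ⟨O, hOW.trans inter_subset_left, hO, hOne, a', fun y hy => ?_⟩
    have hyx : s.label y = s.label x :=
      interior_subset (s := {z | s.label z = s.label x}) (hOW hy).2
    exact hyx ▸ ha' y hy
  obtain ⟨𝒪, h𝒪, hdisj, hdense⟩ := hP.exists_pairwiseDisjoint s.isOpen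
  choose! lab hlab using fun O hO => (h𝒪 O hO).2.2
  let label' : X → α := fun x => if hx : ∃ O ∈ 𝒪, x ∈ O then lab hx.choose else s.label x
  have label'_eq : ∀ O ∈ 𝒪, ∀ x ∈ O, label' x = lab O := by
    intro O hO x hxO
    have hx : ∃ O ∈ 𝒪, x ∈ O := ⟨O, hO, hxO⟩
    simp only [label', dif_pos hx]
    rw [hdisj.elim hx.choose_spec.1 hO (not_disjoint_iff.2 ⟨x, hx.choose_spec.2, hxO⟩)]
  have label'_eventually : ∀ x ∈ ⋃₀ 𝒪, ∀ᶠ y in 𝓝 x, label' y = label' x := by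
    rintro x ⟨O, hO, hxO⟩
    filter_upwards [(h𝒪 O hO).1.mem_nhds hxO] with y hyO
    rw [label'_eq O hO y hyO, label'_eq O hO x hxO]
  refine ⟨⟨⋃₀ 𝒪, label', isOpen_sUnion fun O hO => (h𝒪 O hO).1,
    sUnion_subset fun O hO => (h𝒪 O hO).2.1.trans s.subset,
    s.dense.trans (closure_minimal hdense isClosed_closure), label'_eventually⟩, ?_⟩
  rintro x ⟨O, hO, hxO⟩
  change R _ (label' x) x
  rw [label'_eq O hO x hxO]
  exact hlab O hO x hxO

theorem BaireSpace.exists_mem_forall_mem_of_subset_closure [BaireSpace X] {U : Set X}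
    (hU : IsOpen U) (hUne : U.Nonempty) {D : ℕ → Set X} (hD : ∀ n, IsOpen (D n))
    (hUD : ∀ n, U ⊆ closure (D n)) : ∃ x ∈ U, ∀ n, x ∈ D n := by
  have hdense : ∀ n, Dense (D n ∪ (closure U)ᶜ) := by
    intro n x
    by_cases hx : x ∈ closure U
    · exact closure_mono subset_union_left (closure_minimal (hUD n) isClosed_closure hx)
    · exact subset_closure (Or.inr hx)
  obtain ⟨x, hxU, hxD⟩ := (dense_iInter_of_isOpen_nat
    (fun n => (hD n).union isClosed_closure.isOpen_compl) hdense).inter_open_nonempty U hU hUne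
  refine ⟨x, hxU, fun n => ?_⟩
  rcases mem_iInter.1 hxD n with h | h
  · exact h
  · exact absurd (subset_closure hxU) h

/-- `R n a a' x` reads: at `x`, the `n`-th move may go from the state `a` to `a'`. -/
theorem BaireSpace.exists_seq_of_piDenseIn [BaireSpace X] {α : Type*} {U : Set X}
    (hU : IsOpen U) (hUne : U.Nonempty) (R : ℕ → α → α → X → Prop) (a₀ : α)
    (h : ∀ n a, PiDenseIn U fun O => ∃ a', ∀ x ∈ O, R n a a' x) :
    ∃ x ∈ U, ∃ a : ℕ → α, a 0 = a₀ ∧ ∀ n, R n (a n) (a (n + 1)) x := by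
  have : Nonempty α := ⟨a₀⟩
  choose next hnext using fun n (s : LabelledDenseOpen U α) => s.exists_refine (R n) (h n)
  let s₀ : LabelledDenseOpen U α :=
    ⟨U, fun _ => a₀, hU, subset_rfl, subset_closure, fun _ _ => Filter.Eventually.of_forall
      fun _ => rfl⟩
  let stage : ℕ → LabelledDenseOpen U α := fun n => Nat.rec s₀ next n
  obtain ⟨x, hxU, hx⟩ := BaireSpace.exists_mem_forall_mem_of_subset_closure hU hUne
    (fun n => (stage n).isOpen) fun n => (stage n).dense
  exact ⟨x, hxU, fun n => (stage n).label x, rfl, fun n => hnext n (stage n) x (hx (n + 1))⟩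

end PiDenseIn

section ProductMaps

variable {X Y Z : Type*} [MetricSpace Z]

def SeparatesOn (f : X × Y → Z) (δ : ℝ) (M : Set Y) (O : Set X) : Prop :=
  ∃ u ∈ M, ∃ w ∈ M, ∀ x ∈ O, δ ≤ dist (f (x, u)) (f (x, w))

theorem SeparatesOn.mono {f : X × Y → Z} {δ : ℝ} {M : Set Y} {O O' : Set X}
    (h : SeparatesOn f δ M O) (hO : O' ⊆ O) : SeparatesOn f δ M O' :=
  let ⟨u, hu, w, hw, huw⟩ := h
  ⟨u, hu, w, hw, fun x hx => huw x (hO hx)⟩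

variable [TopologicalSpace X] [TopologicalSpace Y]

theorem CountablePiBase.exists_seq_subset {y : Y} {V : Set Y} (h : CountablePiBase y)
    (hV : V ∈ 𝓝 y) :
    ∃ g : ℕ → Set Y, (∀ k, IsOpen (g k) ∧ (g k).Nonempty ∧ g k ⊆ V) ∧
      ∀ O ∈ 𝓝 y, ∃ k, g k ⊆ O := by
  obtain ⟨B, hBc, hBo, hB⟩ := h
  obtain ⟨M₀, hM₀, hM₀V⟩ := hB V hV
  obtain ⟨g, hg⟩ := (hBc.mono (sep_subset B (· ⊆ V))).exists_eq_range ⟨M₀, hM₀, hM₀V⟩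
  refine ⟨g, fun k => ?_, fun O hO => ?_⟩
  · obtain ⟨hgB, hgV⟩ : g k ∈ {M ∈ B | M ⊆ V} := hg ▸ mem_range_self k
    exact ⟨(hBo _ hgB).1, (hBo _ hgB).2, hgV⟩
  · obtain ⟨M, hM, hMO⟩ := hB (O ∩ V) (Filter.inter_mem hO hV)
    obtain ⟨k, rfl⟩ : M ∈ range g := hg ▸ ⟨hM, hMO.trans inter_subset_right⟩
    exact ⟨k, hMO.trans inter_subset_left⟩

theorem exists_piBase_seq (hY : ∀ y : Y, CountablePiBase y) {V : Set Y} (hV : IsOpen V)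
    (hVne : V.Nonempty) :
    ∃ e : Y → ℕ → Set Y, (∀ t k, IsOpen (e t k) ∧ (e t k).Nonempty ∧ e t k ⊆ V) ∧
      ∀ t ∈ V, ∀ O ∈ 𝓝 t, ∃ k, e t k ⊆ O := by
  have : ∀ t, ∃ g : ℕ → Set Y, (∀ k, IsOpen (g k) ∧ (g k).Nonempty ∧ g k ⊆ V) ∧
      (t ∈ V → ∀ O ∈ 𝓝 t, ∃ k, g k ⊆ O) := by
    intro t
    by_cases ht : t ∈ V
    · obtain ⟨g, hg, hgt⟩ := (hY t).exists_seq_subset (hV.mem_nhds ht)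
      exact ⟨g, hg, fun _ => hgt⟩
    · exact ⟨fun _ => V, fun _ => ⟨hV, hVne, subset_rfl⟩, fun h => absurd h ht⟩
  choose e he het using this
  exact ⟨e, he, het⟩

variable {f : X × Y → Z}

theorem mapsTo_prod_of_subset_closure (hhqc : ∀ a b, HorizontallyQuasicontinuousAt f a b)
    {U₀ : Set X} {V₀ : Set Y} {C : Set Z} (hU₀ : IsOpen U₀) (hV₀ : IsOpen V₀) (hC : IsClosed C)
    (h : U₀ ⊆ closure {x | ∀ y ∈ V₀, f (x, y) ∈ C}) : MapsTo f (U₀ ×ˢ V₀) C := by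
  rintro ⟨x, y⟩ ⟨hx, hy⟩
  by_contra hxy
  obtain ⟨O, hO, ⟨x₁, hx₁⟩, hOU, y', hy', hOC⟩ := hhqc x y Cᶜ (hC.isOpen_compl.mem_nhds hxy)
    U₀ (hU₀.mem_nhds hx) V₀ (hV₀.mem_nhds hy)
  obtain ⟨x', hx'O, hx'⟩ := mem_closure_iff.1 (h (hOU hx₁)) O hO hx₁
  exact hOC x' hx'O (hx' y' hy')

theorem piDenseIn_separatesOn (hhqc : ∀ a b, HorizontallyQuasicontinuousAt f a b)
    (hclq : ∀ y, Cliquish fun x => f (x, y)) {U : Set X} {V : Set Y} {δ : ℝ} (hδ : 0 < δ)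
    (hneg : ∀ (U₀ : Set X) (V₀ : Set Y) (z : Z), IsOpen U₀ → U₀.Nonempty → U₀ ⊆ U →
      IsOpen V₀ → V₀.Nonempty → V₀ ⊆ V →
      ¬U₀ ⊆ closure {x | ∀ y ∈ V₀, f (x, y) ∈ Metric.closedBall z δ})
    {M : Set Y} (hM : IsOpen M) (hMne : M.Nonempty) (hMV : M ⊆ V) :
    PiDenseIn U (SeparatesOn f (δ / 2) M) := by
  intro W hW hWne hWU
  obtain ⟨y₁, hy₁⟩ := hMne
  obtain ⟨O₁, hO₁, ⟨x₁, hx₁⟩, hO₁W, hO₁small⟩ := hclq y₁ (δ / 4) (by positivity) W hW hWne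
  obtain ⟨x₂, hx₂O₁, hx₂⟩ := not_subset.1
    (hneg O₁ M (f (x₁, y₁)) hO₁ ⟨x₁, hx₁⟩ (hO₁W.trans hWU) hM ⟨y₁, hy₁⟩ hMV)
  obtain ⟨y₂, hy₂, hfar⟩ : ∃ y₂ ∈ M, δ < dist (f (x₂, y₂)) (f (x₁, y₁)) := by
    by_contra! hnear
    exact hx₂ (subset_closure hnear)
  obtain ⟨O, hO, hOne, hOO₁, u, hu, hOu⟩ := hhqc x₂ y₂ (Metric.ball (f (x₂, y₂)) (δ / 4))
    (Metric.ball_mem_nhds _ (by positivity)) O₁ (hO₁.mem_nhds hx₂O₁) M (hM.mem_nhds hy₂)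
  refine ⟨O, hOO₁.trans hO₁W, hO, hOne, u, hu, y₁, hy₁, fun x hx => ?_⟩
  have h₁ : dist (f (x₂, y₂)) (f (x, u)) < δ / 4 := by
    rw [dist_comm]
    exact hOu x hx
  have h₂ : dist (f (x, y₁)) (f (x₁, y₁)) < δ / 4 := hO₁small x (hOO₁ hx) x₁ hx₁
  have := dist_triangle4 (f (x₂, y₂)) (f (x, u)) (f (x, y₁)) (f (x₁, y₁))
  linarith

theorem piDenseIn_exists_finset_separatesOn [Nonempty Y] {U : Set X} {V : Set Y} {δ : ℝ}
    {e : Y → ℕ → Set Y}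
    (he : ∀ t k, IsOpen (e t k) ∧ (e t k).Nonempty ∧ e t k ⊆ V)
    (hsep : ∀ M, IsOpen M → M.Nonempty → M ⊆ V → PiDenseIn U (SeparatesOn f δ M))
    (n : ℕ) (A : Finset Y) :
    PiDenseIn U fun O => ∃ A' : Finset Y, ∀ x ∈ O, A ⊆ A' ∧ ∀ t ∈ A, ∀ k ≤ n,
      ∃ u ∈ A', ∃ w ∈ A', u ∈ e t k ∧ w ∈ e t k ∧ δ ≤ dist (f (x, u)) (f (x, w)) := by
  classical
  intro W hW hWne hWU
  set s := A ×ˢ Finset.range (n + 1)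
  obtain ⟨O, hOW, hO, ⟨x₀, hx₀⟩, hsepO⟩ :=
    PiDenseIn.finset_forall (P := fun i => SeparatesOn f δ (e i.1 i.2))
      (fun _ _ _ hO' h => h.mono hO') s
      (fun i _ => hsep _ (he i.1 i.2).1 (he i.1 i.2).2.1 (he i.1 i.2).2.2) W hW hWne hWU
  choose! u hu w hw huw using hsepO
  refine ⟨O, hOW, hO, ⟨x₀, hx₀⟩, A ∪ s.image u ∪ s.image w, fun x hx =>
    ⟨Finset.subset_union_left.trans Finset.subset_union_left, fun t ht k hk => ?_⟩⟩
  have hi : (t, k) ∈ s := Finset.mem_product.2 ⟨ht, Finset.mem_range_succ_iff.2 hk⟩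
  exact ⟨u (t, k), by simp [Finset.mem_image_of_mem u hi], w (t, k),
    by simp [Finset.mem_image_of_mem w hi], hu _ hi, hw _ hi, huw _ hi x hx⟩

theorem false_of_forall_piDenseIn_separatesOn [BaireSpace X] (hY : ∀ y : Y, CountablePiBase y)
    (hfrag : ∀ x, Fragmentable fun y => f (x, y)) {U : Set X} {V : Set Y} {b : Y} {δ : ℝ}
    (hU : IsOpen U) (hUne : U.Nonempty) (hV : IsOpen V) (hb : b ∈ V) (hδ : 0 < δ)
    (hsep : ∀ M, IsOpen M → M.Nonempty → M ⊆ V → PiDenseIn U (SeparatesOn f δ M)) : False := by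
  have : Nonempty Y := ⟨b⟩
  obtain ⟨e, he, he_nhds⟩ := exists_piBase_seq hY hV ⟨b, hb⟩
  obtain ⟨x₀, -, a, ha₀, ha⟩ := BaireSpace.exists_seq_of_piDenseIn hU hUne _ {b}
    (piDenseIn_exists_finset_separatesOn he hsep)
  set S := (⋃ n, (a n : Set Y)) ∩ V
  have hmono : Monotone a := monotone_nat_of_le_succ fun n => (ha n).1
  have hbS : b ∈ S := ⟨mem_iUnion.2 ⟨0, by simp [ha₀]⟩, hb⟩
  obtain ⟨O, hO, ⟨t, ⟨htS, htV⟩, htO⟩, -, hsmall⟩ :=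
    hfrag x₀ S ⟨b, hbS⟩ δ hδ univ isOpen_univ ⟨b, hbS, trivial⟩
  obtain ⟨n₀, htn₀⟩ := mem_iUnion.1 htS
  obtain ⟨k, hk⟩ := he_nhds t htV O (hO.mem_nhds htO)
  obtain ⟨u, hu, w, hw, hue, hwe, hfar⟩ :=
    (ha (max n₀ k)).2 t (hmono (le_max_left n₀ k) htn₀) k (le_max_right n₀ k)
  have hmem : ∀ y ∈ a (max n₀ k + 1), y ∈ e t k → y ∈ S ∩ O := fun y hy hye =>
    ⟨⟨mem_iUnion.2 ⟨_, hy⟩, (he t k).2.2 hye⟩, hk hye⟩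
  exact (hsmall u (hmem u hu hue) w (hmem w hw hwe)).not_ge hfar

end ProductMaps

theorem cliquish_of_horizontally_quasicontinuous {X Y Z : Type*} [TopologicalSpace X]
    [BaireSpace X] [TopologicalSpace Y] [MetricSpace Z] (f : X × Y → Z)
    (hY : ∀ y : Y, CountablePiBase y)
    (hhqc : ∀ (a : X) (b : Y), HorizontallyQuasicontinuousAt f a b)
    (hclq : ∀ y : Y, Cliquish fun x : X => f (x, y))
    (hfrag : ∀ x : X, Fragmentable fun y : Y => f (x, y)) :
    Cliquish f := by
  rintro ε hε G hG ⟨⟨a, b⟩, hab⟩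
  obtain ⟨U, V, hU, hV, ha, hb, hUV⟩ := isOpen_prod_iff.1 hG a b hab
  obtain ⟨U₀, V₀, z, hU₀, hU₀ne, hU₀U, hV₀, hV₀ne, hV₀V, hcontrol⟩ :
      ∃ (U₀ : Set X) (V₀ : Set Y) (z : Z), IsOpen U₀ ∧ U₀.Nonempty ∧ U₀ ⊆ U ∧
        IsOpen V₀ ∧ V₀.Nonempty ∧ V₀ ⊆ V ∧
        U₀ ⊆ closure {x | ∀ y ∈ V₀, f (x, y) ∈ Metric.closedBall z (ε / 3)} := by
    by_contra! hneg
    exact false_of_forall_piDenseIn_separatesOn hY hfrag hU ⟨a, ha⟩ hV hb (by positivity)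
      fun M hM hMne hMV => piDenseIn_separatesOn hhqc hclq (by positivity) hneg hM hMne hMV
  have hmaps := mapsTo_prod_of_subset_closure hhqc hU₀ hV₀ Metric.isClosed_closedBall hcontrol
  refine ⟨U₀ ×ˢ V₀, hU₀.prod hV₀, hU₀ne.prod hV₀ne, (prod_mono hU₀U hV₀V).trans hUV,
    fun p hp q hq => ?_⟩
  have hpz : dist (f p) z ≤ ε / 3 := hmaps hp
  have hqz : dist (f q) z ≤ ε / 3 := hmaps hq
  linarith [dist_triangle_right (f p) (f q) z]
end

section
/- Let X be a Baire space, Y a topological space, (Z,d) a metric space, and f : X × Y → Z such that f_x : y ↦ f(x,y) is continuous for each x ∈ X and f^y : x ↦ f(x,y) is quasicontinuous for each y ∈ Y. Let b ∈ Y be a point having a countable π-base in Y, let V be a neighborhood of b, ε > 0, and U ⊆ X a nonempty open set. Then there is a nonempty open set O × W ⊆ U × V such that d(f(x,y), f(x,b)) ≤ ε for every (x,y) ∈ O × W. -/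
/-!
Enumerate the members W₀, W₁, … of the π-base at `b` that lie in `V`. By continuity of each
`f_x` at `b`, every `x` lies in some `Eₙ = {x | d(f(x,y), f(x,b)) ≤ ε/4 for all y ∈ Wₙ}`, so by
Baire some `closure Eₙ` contains a nonempty open `G ⊆ U`. Quasicontinuity of `f^b` shrinks `G`
to a nonempty open `O` on which `f^b` oscillates by less than `ε/2`. For `x ∈ O` and `y ∈ Wₙ`,
quasicontinuity of `f^y` yields `x' ∈ Eₙ ∩ O` with `f(x',y)` close to `f(x,y)`, and
`f(x,y) ≈ f(x',y) ≈ f(x',b) ≈ f(x,b)`.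
-/

open Set Topology

def Quasicontinuous' {X Z : Type*} [TopologicalSpace X] [MetricSpace Z] (f : X → Z) : Prop :=
  ∀ ε : ℝ, 0 < ε → ∀ x : X, ∀ V ∈ nhds x,
    ∃ O : Set X, IsOpen O ∧ O.Nonempty ∧ O ⊆ V ∧
      ∀ y ∈ O, dist (f x) (f y) < ε

theorem CountablePiBase.exists_seq_subset_s13 {Y : Type*} [TopologicalSpace Y] {b : Y}
    (hb : CountablePiBase b) {V : Set Y} (hV : V ∈ 𝓝 b) :
    ∃ W : ℕ → Set Y, (∀ n, IsOpen (W n) ∧ (W n).Nonempty ∧ W n ⊆ V) ∧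
      ∀ N ∈ 𝓝 b, ∃ n, W n ⊆ N := by
  obtain ⟨B, hBc, hBopen, hBbase⟩ := hb
  have hB'ne : {O ∈ B | O ⊆ V}.Nonempty := hBbase V hV
  obtain ⟨W, hW⟩ := (hBc.mono (sep_subset B _)).exists_eq_range hB'ne
  have hWmem (n : ℕ) : W n ∈ {O ∈ B | O ⊆ V} := hW.symm ▸ mem_range_self n
  refine ⟨W, fun n => ⟨(hBopen _ (hWmem n).1).1, (hBopen _ (hWmem n).1).2, (hWmem n).2⟩,
    fun N hN => ?_⟩
  obtain ⟨O, hOB, hON⟩ := hBbase _ (Filter.inter_mem hN hV)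
  obtain ⟨n, rfl⟩ : O ∈ range W := hW ▸ ⟨hOB, hON.trans inter_subset_right⟩
  exact ⟨n, hON.trans inter_subset_left⟩

theorem exists_isOpen_subset_closure_of_iUnion_eq_univ {X ι : Type*} [TopologicalSpace X]
    [BaireSpace X] [Countable ι] {E : ι → Set X} (hE : ⋃ i, E i = univ) {U : Set X}
    (hU : IsOpen U) (hUne : U.Nonempty) :
    ∃ i, ∃ G : Set X, IsOpen G ∧ G.Nonempty ∧ G ⊆ U ∧ G ⊆ closure (E i) := by
  have hcover : ⋃ i, closure (E i) = univ :=
    univ_subset_iff.mp (hE ▸ iUnion_mono fun i => subset_closure)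
  obtain ⟨x, hxU, hx⟩ :=
    (dense_iUnion_interior_of_closed (fun i => isClosed_closure) hcover).inter_open_nonempty
      U hU hUne
  obtain ⟨i, hi⟩ := mem_iUnion.mp hx
  exact ⟨i, U ∩ interior (closure (E i)), hU.inter isOpen_interior, ⟨x, hxU, hi⟩,
    inter_subset_left, inter_subset_right.trans interior_subset⟩

namespace Quasicontinuous'

variable {X Z : Type*} [TopologicalSpace X] [MetricSpace Z] {g : X → Z}

theorem exists_isOpen_subset_dist_lt (hg : Quasicontinuous' g) {ε : ℝ} (hε : 0 < ε)
    {G : Set X} (hG : IsOpen G) (hGne : G.Nonempty) :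
    ∃ O : Set X, IsOpen O ∧ O.Nonempty ∧ O ⊆ G ∧ ∀ x ∈ O, ∀ x' ∈ O, dist (g x) (g x') < ε := by
  obtain ⟨x₀, hx₀⟩ := hGne
  obtain ⟨O, hO, hOne, hOG, hclose⟩ := hg (ε / 2) (half_pos hε) x₀ G (hG.mem_nhds hx₀)
  refine ⟨O, hO, hOne, hOG, fun x hx x' hx' => ?_⟩
  calc dist (g x) (g x') ≤ dist (g x₀) (g x) + dist (g x₀) (g x') := dist_triangle_left _ _ _
    _ < ε / 2 + ε / 2 := add_lt_add (hclose x hx) (hclose x' hx')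
    _ = ε := add_halves ε

theorem exists_mem_dist_lt_of_subset_closure (hg : Quasicontinuous' g) {ε : ℝ} (hε : 0 < ε)
    {E O : Set X} (hO : IsOpen O) (hOE : O ⊆ closure E) {x : X} (hx : x ∈ O) :
    ∃ x' ∈ O ∩ E, dist (g x) (g x') < ε := by
  obtain ⟨O₁, hO₁, ⟨z, hz⟩, hO₁O, hclose⟩ := hg ε hε x O (hO.mem_nhds hx)
  obtain ⟨x', hx'O₁, hx'E⟩ := mem_closure_iff.mp (hOE (hO₁O hz)) O₁ hO₁ hz
  exact ⟨x', ⟨hO₁O hx'O₁, hx'E⟩, hclose x' hx'O₁⟩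

end Quasicontinuous'

theorem local_uniform_approx {X Y Z : Type*} [TopologicalSpace X] [BaireSpace X]
    [TopologicalSpace Y] [MetricSpace Z] (f : X × Y → Z)
    (hc : ∀ x : X, Continuous fun y : Y => f (x, y))
    (hqc : ∀ y : Y, Quasicontinuous' fun x : X => f (x, y))
    (b : Y) (hb : CountablePiBase b) (V : Set Y) (hV : V ∈ nhds b)
    (ε : ℝ) (hε : 0 < ε) (U : Set X) (hU : IsOpen U) (hUne : U.Nonempty) :
    ∃ O : Set X, ∃ W : Set Y, IsOpen O ∧ IsOpen W ∧ O.Nonempty ∧ W.Nonempty ∧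
      O ⊆ U ∧ W ⊆ V ∧ ∀ x ∈ O, ∀ y ∈ W, dist (f (x, y)) (f (x, b)) ≤ ε := by
  obtain ⟨W, hW, hWbase⟩ := hb.exists_seq_subset_s13 hV
  set E : ℕ → Set X := fun n => {x | ∀ y ∈ W n, dist (f (x, y)) (f (x, b)) ≤ ε / 4}
  have hE : ⋃ n, E n = univ := eq_univ_of_forall fun x => by
    have hnear : ∀ᶠ y in 𝓝 b, dist (f (x, y)) (f (x, b)) ≤ ε / 4 :=
      (Metric.tendsto_nhds.mp ((hc x).tendsto b) (ε / 4) (by positivity)).mono fun _ => le_of_lt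
    obtain ⟨n, hn⟩ := hWbase _ hnear
    exact mem_iUnion.mpr ⟨n, fun y hy => hn hy⟩
  obtain ⟨n, G, hG, hGne, hGU, hGE⟩ := exists_isOpen_subset_closure_of_iUnion_eq_univ hE hU hUne
  obtain ⟨O, hO, hOne, hOG, hOosc⟩ := (hqc b).exists_isOpen_subset_dist_lt (half_pos hε) hG hGne
  refine ⟨O, W n, hO, (hW n).1, hOne, (hW n).2.1, hOG.trans hGU, (hW n).2.2,
    fun x hx y hy => ?_⟩
  obtain ⟨x', ⟨hx'O, hx'E⟩, hxx'⟩ := (hqc y).exists_mem_dist_lt_of_subset_closure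
    (by positivity : 0 < ε / 4) hO (hOG.trans hGE) hx
  calc dist (f (x, y)) (f (x, b))
      ≤ dist (f (x, y)) (f (x', y)) + dist (f (x', y)) (f (x', b)) + dist (f (x', b)) (f (x, b)) :=
        dist_triangle4 _ _ _ _
    _ ≤ ε / 4 + ε / 4 + ε / 2 :=
        add_le_add (add_le_add hxx'.le (hx'E y hy)) (hOosc x' hx'O x hx).le
    _ = ε := by ring
end

section
/- Let X be a Baire space, Y a topological space such that the set of points of Y having a countable π-base is dense in Y, (Z,d) a metric space, and f : X × Y → Z. If f_x : y ↦ f(x,y) is continuous for every x ∈ X and f^y : x ↦ f(x,y) is quasicontinuous for every y ∈ Y, then f is quasicontinuous on X × Y. -/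
open Set Topology

/-! Given a box `U × V` around `(x₀, y₀)` and `c = f (x₀, y₀)`, pick `y₁ ∈ V` with a countable
π-base `B` and `f (x₀, y₁)` close to `c`, and, by quasicontinuity of `f (·, y₁)`, a nonempty open
`U₁ ⊆ U` on which `f (·, y₁)` stays close to `c`. Continuity of each `f (x, ·)` at `y₁` covers `U₁`
by the countably many sets `E O = {x | f (x, ·) is close to c on O}`, `O ∈ B`, so by the Baire
property some `E O` is dense in a nonempty open `G ⊆ U₁`. Quasicontinuity of each `f (·, y)`
transfers the estimate from `E O` to all of `G`, so `f` stays close to `c` on `G × O`. -/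

theorem exists_isOpen_subset_closure_of_subset_biUnion {X ι : Type*} [TopologicalSpace X]
    [BaireSpace X] {S : Set ι} (hS : S.Countable) {E : ι → Set X} {U : Set X} (hU : IsOpen U)
    (hUne : U.Nonempty) (hcover : U ⊆ ⋃ i ∈ S, E i) :
    ∃ i ∈ S, ∃ G : Set X, IsOpen G ∧ G.Nonempty ∧ G ⊆ U ∧ G ⊆ closure (E i) := by
  have hclosed : ∀ i ∈ S, IsClosed (closure (E i) ∪ Uᶜ) :=
    fun i _ => isClosed_closure.union hU.isClosed_compl
  obtain ⟨i₀, hi₀, -⟩ := mem_iUnion₂.mp (hcover hUne.some_mem)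
  have hunion : ⋃ i ∈ S, (closure (E i) ∪ Uᶜ) = univ := by
    refine eq_univ_of_forall fun x => ?_
    by_cases hx : x ∈ U
    · obtain ⟨i, hi, hxi⟩ := mem_iUnion₂.mp (hcover hx)
      exact mem_iUnion₂.mpr ⟨i, hi, Or.inl (subset_closure hxi)⟩
    · exact mem_iUnion₂.mpr ⟨i₀, hi₀, Or.inr hx⟩
  obtain ⟨z, hzi, hzU⟩ :=
    (dense_biUnion_interior_of_closed hclosed hS hunion).exists_mem_open hU hUne
  obtain ⟨i, hi, hz⟩ := mem_iUnion₂.mp hzi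
  refine ⟨i, hi, U ∩ interior (closure (E i) ∪ Uᶜ), hU.inter isOpen_interior, ⟨z, hzU, hz⟩,
    inter_subset_left, fun x ⟨hxU, hx⟩ => ?_⟩
  exact (interior_subset hx).resolve_right (not_not_intro hxU)

theorem Quasicontinuous'.mem_closure_image {X Z : Type*} [TopologicalSpace X] [MetricSpace Z]
    {g : X → Z} (hg : Quasicontinuous' g) {E : Set X} {x : X} (hx : x ∈ interior (closure E)) :
    g x ∈ closure (g '' E) := by
  refine Metric.mem_closure_iff.mpr fun δ hδ => ?_
  obtain ⟨O, hOo, ⟨x', hx'⟩, hOsub, hO⟩ :=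
    hg δ hδ x _ (isOpen_interior.mem_nhds hx)
  obtain ⟨x'', hx''O, hx''E⟩ :=
    mem_closure_iff.mp (interior_subset (hOsub hx')) O hOo hx'
  exact ⟨g x'', mem_image_of_mem g hx''E, hO x'' hx''O⟩

theorem exists_isOpen_prod_dist_le {X Y Z : Type*} [TopologicalSpace X] [BaireSpace X]
    [TopologicalSpace Y] [MetricSpace Z] {f : X × Y → Z}
    (hc : ∀ x : X, Continuous fun y : Y => f (x, y))
    (hqc : ∀ y : Y, Quasicontinuous' fun x : X => f (x, y))
    {y₁ : Y} (hy₁ : CountablePiBase y₁) {V : Set Y} (hV : V ∈ 𝓝 y₁)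
    {U : Set X} (hU : IsOpen U) (hUne : U.Nonempty) {c : Z} {r : ℝ}
    (hUr : ∀ x ∈ U, dist (f (x, y₁)) c < r) :
    ∃ G : Set X, ∃ O : Set Y, IsOpen G ∧ G.Nonempty ∧ G ⊆ U ∧ IsOpen O ∧ O.Nonempty ∧ O ⊆ V ∧
      ∀ x ∈ G, ∀ y ∈ O, dist (f (x, y)) c ≤ r := by
  obtain ⟨B, hBc, hBo, hB⟩ := hy₁
  set E : Set Y → Set X := fun O => {x | ∀ y ∈ O, dist (f (x, y)) c < r}
  have hcover : U ⊆ ⋃ O ∈ {O ∈ B | O ⊆ V}, E O := by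
    intro x hx
    have hN : {y | dist (f (x, y)) c < r} ∈ 𝓝 y₁ :=
      (isOpen_lt ((hc x).dist continuous_const) continuous_const).mem_nhds (hUr x hx)
    obtain ⟨O, hOB, hOsub⟩ := hB _ (Filter.inter_mem hN hV)
    exact mem_biUnion ⟨hOB, hOsub.trans inter_subset_right⟩ fun y hy => (hOsub hy).1
  obtain ⟨O, ⟨hOB, hOV⟩, G, hGo, hGne, hGU, hGE⟩ :=
    exists_isOpen_subset_closure_of_subset_biUnion (hBc.mono (sep_subset _ _)) hU hUne hcover
  refine ⟨G, O, hGo, hGne, hGU, (hBo O hOB).1, (hBo O hOB).2, hOV, fun x hx y hy => ?_⟩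
  have hball : (fun x => f (x, y)) '' E O ⊆ Metric.closedBall c r := by
    rintro _ ⟨x', hx', rfl⟩
    exact Metric.mem_closedBall.mpr (hx' y hy).le
  exact Metric.mem_closedBall.mp <| Metric.isClosed_closedBall.closure_subset_iff.mpr hball <|
    (hqc y).mem_closure_image (interior_maximal hGE hGo hx)

theorem quasicontinuous_of_separately {X Y Z : Type*} [TopologicalSpace X] [BaireSpace X]
    [TopologicalSpace Y] [MetricSpace Z] (f : X × Y → Z)
    (hY : Dense {y : Y | CountablePiBase y})
    (hc : ∀ x : X, Continuous fun y : Y => f (x, y))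
    (hqc : ∀ y : Y, Quasicontinuous' fun x : X => f (x, y)) :
    Quasicontinuous' f := by
  rintro ε hε ⟨x₀, y₀⟩ W hW
  obtain ⟨U, V, hUo, hx₀U, hVo, hy₀V, hUV⟩ := mem_nhds_prod_iff'.mp hW
  set c := f (x₀, y₀)
  set V' : Set Y := V ∩ {y | dist (f (x₀, y)) c < ε / 4}
  have hV'o : IsOpen V' :=
    hVo.inter (isOpen_lt ((hc x₀).dist continuous_const) continuous_const)
  have hy₀V' : y₀ ∈ V' := ⟨hy₀V, by simpa [c] using hε⟩
  obtain ⟨y₁, hy₁, hy₁V'⟩ := hY.exists_mem_open hV'o ⟨y₀, hy₀V'⟩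
  obtain ⟨U₁, hU₁o, hU₁ne, hU₁U, hU₁⟩ := hqc y₁ (ε / 4) (by positivity) x₀ U (hUo.mem_nhds hx₀U)
  have hU₁r : ∀ x ∈ U₁, dist (f (x, y₁)) c < ε / 2 := fun x hx =>
    calc dist (f (x, y₁)) c ≤ dist (f (x₀, y₁)) (f (x, y₁)) + dist (f (x₀, y₁)) c :=
          dist_triangle_left _ _ _
      _ < ε / 4 + ε / 4 := add_lt_add (hU₁ x hx) hy₁V'.2
      _ = ε / 2 := by ring
  obtain ⟨G, O, hGo, hGne, hGU, hOo, hOne, hOV, hGO⟩ :=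
    exists_isOpen_prod_dist_le hc hqc hy₁ (hV'o.mem_nhds hy₁V') hU₁o hU₁ne hU₁r
  refine ⟨G ×ˢ O, hGo.prod hOo, hGne.prod hOne,
    (prod_mono (hGU.trans hU₁U) (hOV.trans inter_subset_left)).trans hUV, ?_⟩
  rintro ⟨x, y⟩ ⟨hx, hy⟩
  rw [dist_comm]
  exact (hGO x hx y hy).trans_lt (by linarith)
end

section
/- Let Y be a dense-in-itself metrizable space in which every separable subspace has empty interior, and let X = Σ(0) ⊆ 2^Y be the Σ-product {x ∈ 2^Y : {y : x(y) = 1} is countable} with the subspace topology from the product 2^Y. Then the evaluation map e : X × Y → {0,1}, e(x,y) = x(y), is continuous in x for each fixed y, cliquish in y for each fixed x, but e is not cliquish on X × Y. -/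
open Set Topology

/-!
Off the closure of the countable set `{y | x y = true}`, which is nowhere dense, the section
`y ↦ x y` vanishes; this gives cliquishness in `y`. A neighbourhood of `x₀` in the Σ-product only
constrains finitely many coordinates, and a finite set has empty interior, so every nonempty open
set `W ×ˢ V` contains points `(x₀, y₁)` and `(update x₀ y₁ (!x₀ y₁), y₁)` at which the evaluation
takes both values: `e` is not cliquish.
-/

lemma IsNowhereDense.diff_closure_nonempty {X : Type*} [TopologicalSpace X] {s U : Set X}
    (hs : IsNowhereDense s) (hU : IsOpen U) (hUne : U.Nonempty) : (U \ closure s).Nonempty := by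
  rw [sdiff_eq]
  exact (interior_eq_empty_iff_dense_compl.mp hs).inter_open_nonempty U hU hUne

lemma cliquish_of_eqOn_compl {X Z : Type*} [TopologicalSpace X] [MetricSpace Z] {f : X → Z}
    {s : Set X} {c : Z} (hs : IsNowhereDense s) (hf : EqOn f (fun _ ↦ c) sᶜ) : Cliquish f := by
  intro ε hε U hU hUne
  refine ⟨U \ closure s, hU.sdiff isClosed_closure, hs.diff_closure_nonempty hU hUne,
    sdiff_subset, fun x hx y hy ↦ ?_⟩
  have hx' : x ∉ s := fun h ↦ hx.2 (subset_closure h)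
  have hy' : y ∉ s := fun h ↦ hy.2 (subset_closure h)
  rwa [hf hx', hf hy', dist_self]

abbrev SigmaProduct (Y : Type*) := {x : Y → Bool // {y : Y | x y = true}.Countable}

namespace SigmaProduct

variable {Y : Type*}

instance : Inhabited (SigmaProduct Y) := ⟨⟨fun _ ↦ false, by simp⟩⟩

def update [DecidableEq Y] (x : SigmaProduct Y) (y : Y) (b : Bool) : SigmaProduct Y :=
  ⟨Function.update x.1 y b, (x.2.insert y).mono fun y' hy' ↦ by
    rcases eq_or_ne y' y with rfl | hne
    · exact mem_insert _ _
    · exact Or.inr (by simpa [Function.update_of_ne hne] using hy')⟩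

lemma exists_finite_forall_update_mem [DecidableEq Y] {x : SigmaProduct Y}
    {W : Set (SigmaProduct Y)} (hW : W ∈ 𝓝 x) :
    ∃ I : Set Y, I.Finite ∧ ∀ y ∉ I, ∀ b, x.update y b ∈ W := by
  rw [nhds_subtype_eq_comap, Filter.mem_comap] at hW
  obtain ⟨W', hW', hW'W⟩ := hW
  rw [nhds_pi, Filter.mem_pi] at hW'
  obtain ⟨I, hI, t, ht, hIt⟩ := hW'
  refine ⟨I, hI, fun y hy b ↦ hW'W (hIt fun i hi ↦ ?_)⟩
  have hne : i ≠ y := fun h ↦ hy (h ▸ hi)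
  simpa [update, Function.update_of_ne hne] using mem_of_mem_nhds (ht i)

lemma not_cliquish_eval [TopologicalSpace Y] [Nonempty Y]
    (hfin : ∀ I : Set Y, I.Finite → IsNowhereDense I) :
    ¬ Cliquish (fun p : SigmaProduct Y × Y ↦ if p.1.1 p.2 then (1 : ℝ) else 0) := by
  classical
  intro hcl
  obtain ⟨O, hO, ⟨⟨x₀, y₀⟩, hp⟩, -, hosc⟩ := hcl 1 one_pos univ isOpen_univ univ_nonempty
  obtain ⟨W, hW, V, hV, hWV⟩ := mem_nhds_prod_iff.mp (hO.mem_nhds hp)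
  obtain ⟨I, hI, hupdate⟩ := exists_finite_forall_update_mem hW
  obtain ⟨y₁, hy₁V, hy₁I⟩ := (hfin I hI).diff_closure_nonempty isOpen_interior
    ⟨y₀, mem_interior_iff_mem_nhds.mpr hV⟩
  have hy₁ : y₁ ∈ V := interior_subset hy₁V
  replace hy₁I : y₁ ∉ I := fun h ↦ hy₁I (subset_closure h)
  have hdist := hosc (x₀, y₁) (hWV ⟨mem_of_mem_nhds hW, hy₁⟩)
    (x₀.update y₁ (!x₀.1 y₁), y₁) (hWV ⟨hupdate y₁ hy₁I _, hy₁⟩)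
  simp only [update, Function.update_self] at hdist
  rcases Bool.eq_false_or_eq_true (x₀.1 y₁) with h | h <;> norm_num [h] at hdist

end SigmaProduct

theorem evaluation_not_cliquish_general {Y : Type*} [TopologicalSpace Y]
    (hsep : ∀ S : Set Y, TopologicalSpace.IsSeparable S → interior S = ∅)
    [Nonempty Y] :
    (∀ y : Y, Continuous fun x : {x : Y → Bool // {y' : Y | x y' = true}.Countable} =>
        (if x.1 y then (1 : ℝ) else 0)) ∧
    (∀ x : {x : Y → Bool // {y' : Y | x y' = true}.Countable},
        Cliquish fun y : Y => (if x.1 y then (1 : ℝ) else 0)) ∧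
    ¬ Cliquish (fun p : {x : Y → Bool // {y' : Y | x y' = true}.Countable} × Y =>
        (if p.1.1 p.2 then (1 : ℝ) else 0)) := by
  have hnd : ∀ S : Set Y, TopologicalSpace.IsSeparable S → IsNowhereDense S :=
    fun S hS ↦ hsep _ hS.closure
  refine ⟨fun y ↦ ?_, fun x ↦ ?_, ?_⟩
  · have hy : Continuous fun x : SigmaProduct Y ↦ x.1 y :=
      (continuous_apply (A := fun _ ↦ Bool) y).comp continuous_subtype_val
    exact (continuous_of_discreteTopology (f := fun b : Bool ↦ if b then (1 : ℝ) else 0)).comp hy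
  · refine cliquish_of_eqOn_compl (c := 0) (hnd _ x.2.isSeparable) fun y hy ↦ ?_
    simp [show x.1 y = false by simpa using hy]
  · exact SigmaProduct.not_cliquish_eval fun I hI ↦ hnd I hI.countable.isSeparable

theorem evaluation_not_cliquish {Y : Type*} [TopologicalSpace Y]
    [TopologicalSpace.MetrizableSpace Y]
    (hY : ∀ y : Y, ¬ IsOpen ({y} : Set Y))
    (hsep : ∀ S : Set Y, TopologicalSpace.IsSeparable S → interior S = ∅)
    [Nonempty Y] :
    (∀ y : Y, Continuous fun x : {x : Y → Bool // {y' : Y | x y' = true}.Countable} =>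
        (if x.1 y then (1 : ℝ) else 0)) ∧
    (∀ x : {x : Y → Bool // {y' : Y | x y' = true}.Countable},
        Cliquish fun y : Y => (if x.1 y then (1 : ℝ) else 0)) ∧
    ¬ Cliquish (fun p : {x : Y → Bool // {y' : Y | x y' = true}.Countable} × Y =>
        (if p.1.1 p.2 then (1 : ℝ) else 0)) :=
  evaluation_not_cliquish_general hsep
end

section
/- Let X be a Baire space, Y a topological space, (Z,d) a metric space, and let y ∈ Y have a countable network N consisting of somewhere dense subsets of Y. Let f : X × Y → Z be such that the section f_x is continuous at y for every x in a nonmeager subset R ⊆ X. Then for every ε > 0 and every neighborhood V of y there exist a nonempty open set U ⊆ X and a set L ∈ N with L ⊆ V such that for every b ∈ L the set {x ∈ U : d(f(x,b), f(x,y)) < ε} is dense in U. -/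
/-!
By continuity of `f (x, ·)` at `y` and the network property, every `x ∈ R` lies in
`E N = {x | ∀ b ∈ N, d(f(x,b), f(x,y)) < ε}` for some `N ∈ 𝒩` with `N ⊆ V`. These countably many sets
cover the nonmeagre set `R`, so one `E N` is not nowhere dense, and `U = interior (closure (E N))`
works.
-/

open Set Topology

lemma exists_not_isNowhereDense_of_not_isMeagre {X ι : Type*} [TopologicalSpace X] [Countable ι]
    {R : Set X} {E : ι → Set X} (hR : ¬IsMeagre R) (hcover : R ⊆ ⋃ i, E i) :
    ∃ i, ¬IsNowhereDense (E i) := by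
  contrapose! hR
  exact (isMeagre_iUnion fun i => (hR i).isMeagre).mono hcover

lemma interior_closure_subset_closure_inter {X : Type*} [TopologicalSpace X] (s : Set X) :
    interior (closure s) ⊆ closure (interior (closure s) ∩ s) :=
  fun _ hx => isOpen_interior.inter_closure ⟨hx, interior_subset hx⟩

lemma exists_isOpen_subset_closure_inter_of_not_isMeagre {X ι : Type*} [TopologicalSpace X]
    [Countable ι] {R : Set X} {E : ι → Set X} (hR : ¬IsMeagre R) (hcover : R ⊆ ⋃ i, E i) :
    ∃ i, ∃ U : Set X, IsOpen U ∧ U.Nonempty ∧ U ⊆ closure (U ∩ E i) := by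
  obtain ⟨i, hi⟩ := exists_not_isNowhereDense_of_not_isMeagre hR hcover
  exact ⟨i, _, isOpen_interior, nonempty_iff_ne_empty.2 hi,
    interior_closure_subset_closure_inter _⟩

theorem remark_countable_network_general {X Y Z : Type*} [TopologicalSpace X]
    [TopologicalSpace Y] [MetricSpace Z] (f : X × Y → Z) (y : Y)
    (𝒩 : Set (Set Y)) (hcount : 𝒩.Countable)
    (hnet : ∀ U ∈ nhds y, ∃ N ∈ 𝒩, N.Nonempty ∧ N ⊆ U)
    (R : Set X) (hR : ¬ IsMeagre R)
    (hcont : ∀ x ∈ R, ContinuousAt (fun y' : Y => f (x, y')) y)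
    (ε : ℝ) (hε : 0 < ε) (V : Set Y) (hV : V ∈ nhds y) :
    ∃ U : Set X, IsOpen U ∧ U.Nonempty ∧ ∃ L ∈ 𝒩, L ⊆ V ∧
      ∀ b ∈ L, U ⊆ closure {x : X | x ∈ U ∧ dist (f (x, b)) (f (x, y)) < ε} := by
  have : Countable {N ∈ 𝒩 | N ⊆ V} := (hcount.mono (sep_subset _ _)).to_subtype
  let E : {N ∈ 𝒩 | N ⊆ V} → Set X :=
    fun N => {x | ∀ b ∈ N.1, dist (f (x, b)) (f (x, y)) < ε}
  have hcover : R ⊆ ⋃ N, E N := by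
    intro x hx
    obtain ⟨N, hN𝒩, -, hN⟩ :=
      hnet _ (Filter.inter_mem (hcont x hx (Metric.ball_mem_nhds _ hε)) hV)
    exact mem_iUnion.2 ⟨⟨N, hN𝒩, fun b hb => (hN hb).2⟩, fun b hb => (hN hb).1⟩
  obtain ⟨⟨N, hN𝒩, hNV⟩, U, hU, hUne, hUE⟩ :=
    exists_isOpen_subset_closure_inter_of_not_isMeagre hR hcover
  exact ⟨U, hU, hUne, N, hN𝒩, hNV, fun b hb =>
    hUE.trans (closure_mono fun x hx => ⟨hx.1, hx.2 b hb⟩)⟩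

theorem remark_countable_network {X Y Z : Type*} [TopologicalSpace X] [BaireSpace X]
    [TopologicalSpace Y] [MetricSpace Z] (f : X × Y → Z) (y : Y)
    (𝒩 : Set (Set Y)) (hcount : 𝒩.Countable)
    (hsd : ∀ N ∈ 𝒩, (interior (closure N)).Nonempty)
    (hnet : ∀ U ∈ nhds y, ∃ N ∈ 𝒩, N.Nonempty ∧ N ⊆ U)
    (R : Set X) (hR : ¬ IsMeagre R)
    (hcont : ∀ x ∈ R, ContinuousAt (fun y' : Y => f (x, y')) y)
    (ε : ℝ) (hε : 0 < ε) (V : Set Y) (hV : V ∈ nhds y) :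
    ∃ U : Set X, IsOpen U ∧ U.Nonempty ∧ ∃ L ∈ 𝒩, L ⊆ V ∧
      ∀ b ∈ L, U ⊆ closure {x : X | x ∈ U ∧ dist (f (x, b)) (f (x, y)) < ε} :=
  remark_countable_network_general f y 𝒩 hcount hnet R hR hcont ε hε V hV
end
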